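/- arXiv:2009.12692 — 6 statements merged into one kernel-verified Lean document; each statement's English description precedes it below -/
import Mathlib

section
/- For every integers m ≥ 2 and k ≥ 2, the choice number of the complete k-partite graph with all parts of size m satisfies ch(K_{m*k}) ≤ k·(ln m + ln ln m + 20). -/
/-- A graph `G` is `s`-choosable if for every assignment of a list (finite set) of `s` colors to
each vertex there is a proper coloring choosing each vertex's color from its list. -/
def Choosable {V : Type*} (G : SimpleGraph V) (s : ℕ) : Prop :=
  ∀ L : V → Finset ℕ, (∀ v, (L v).card = s) →
    ∃ f : V → ℕ, (∀ v, f v ∈ L v) ∧ ∀ u v, G.Adj u v → f u ≠ f v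

/-- The choice number of `G`: the smallest `s` such that `G` is `s`-choosable. -/
noncomputable def choiceNumber {V : Type*} (G : SimpleGraph V) : ℕ :=
  sInf {s | Choosable G s}

/-- `K_{m*k}`: the complete `k`-partite graph with all `k` parts of size `m`. -/
abbrev Kmk (m k : ℕ) : SimpleGraph ((_ : Fin k) × Fin m) :=
  SimpleGraph.completeMultipartiteGraph fun _ : Fin k => Fin m

/-!
Send every color `c` to a uniformly random part `g c`. A vertex may then use the colors of its
list sent to its own part (its own colors): own colors of different parts are distinct. With
`s = ⌊k (ln m + ln ln m + 20)⌋` the expected number of vertices without own colors is a tiny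
fraction of `k`, and so is the expected potential `∑ v, d_v! q^(d_v - 1)`, `q = k / (4 s)`,
relative to `s`, where `d_v` counts the own colors of `v` still free. These bad vertices then receive distinct colors one
at a time, avoiding every color that is the last free own color of some vertex; the potential
bounds the number of such critical colors, and choosing the color that increases it least keeps
it under control by averaging.
-/

open Finset Nat

namespace MultipartiteChoice

/-- Chosen so that `d * potentialWeight q (d - 1) = potentialWeight q d / q` for `d ≥ 2`. -/
noncomputable def potentialWeight (q : ℝ) (d : ℕ) : ℝ := d ! * q ^ (d - 1)

section Weight

variable {q : ℝ}

lemma potentialWeight_nonneg (hq : 0 ≤ q) (d : ℕ) : 0 ≤ potentialWeight q d := by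
  unfold potentialWeight; positivity

@[simp] lemma potentialWeight_zero : potentialWeight q 0 = 1 := by simp [potentialWeight]

@[simp] lemma potentialWeight_one : potentialWeight q 1 = 1 := by simp [potentialWeight]

lemma potentialWeight_add_two (d : ℕ) :
    potentialWeight q (d + 2) = (d + 2) * q * potentialWeight q (d + 1) := by
  simp only [potentialWeight, Nat.factorial_succ (d + 1), add_tsub_cancel_right]
  push_cast
  ring

/-- Only the `#D` colors of `D` change the weight, each by at most `potentialWeight q (#D - 1)`. -/
lemma sum_potentialWeight_erase_sub_le (hq : 0 < q) {α : Type*} [DecidableEq α]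
    (D A : Finset α) (hA : ∀ c ∈ A, D ≠ {c}) :
    ∑ c ∈ A, (potentialWeight q #(D.erase c) - potentialWeight q #D) ≤
      potentialWeight q #D / q := by
  have hD := potentialWeight_nonneg hq.le #D
  rcases Nat.lt_or_ge #D 2 with hsmall | hlarge
  · have hzero : ∀ c ∈ A, D.erase c = D := fun c hc => erase_eq_of_notMem fun hcD =>
      hA c hc (eq_singleton_iff_unique_mem.2 ⟨hcD, fun x hx =>
        card_le_one.1 (by omega) x hx c hcD⟩)
    rw [sum_congr rfl fun c hc => by rw [hzero c hc, sub_self], sum_const_zero]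
    positivity
  obtain ⟨d, hd⟩ := Nat.exists_eq_add_of_le' hlarge
  have hterm : ∀ c ∈ A, potentialWeight q #(D.erase c) - potentialWeight q #D ≤
      if c ∈ D then potentialWeight q (d + 1) else 0 := by
    intro c _
    split_ifs with hcD
    · rw [card_erase_of_mem hcD, hd, show d + 2 - 1 = d + 1 by omega]
      linarith [potentialWeight_nonneg hq.le (d + 2)]
    · rw [erase_eq_of_notMem hcD, sub_self]
  calc ∑ c ∈ A, (potentialWeight q #(D.erase c) - potentialWeight q #D)
      ≤ ∑ c ∈ A, if c ∈ D then potentialWeight q (d + 1) else 0 := sum_le_sum hterm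
    _ = #(A.filter (· ∈ D)) * potentialWeight q (d + 1) := by
      rw [sum_ite, sum_const_zero, add_zero, sum_const, nsmul_eq_mul]
    _ ≤ (d + 2) * potentialWeight q (d + 1) := by
      gcongr
      · exact potentialWeight_nonneg hq.le _
      · exact_mod_cast hd ▸ card_le_card fun c hc => (mem_filter.1 hc).2
    _ = potentialWeight q #D / q := by
      rw [hd, potentialWeight_add_two]; field_simp

/-- `C(s, j) * j! ≤ s ^ j` and `s * q ≤ x / 2` turn the terms with `j ≥ 1` into a geometric
series. -/
lemma sum_choose_mul_potentialWeight_le (hq : 0 ≤ q) {x : ℝ} {s : ℕ} (hqx : 2 * s * q ≤ x) :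
    ∑ j ∈ range (s + 1), s.choose j * potentialWeight q j * x ^ (s - j) ≤
      x ^ s + 2 * s * x ^ (s - 1) := by
  have hx : 0 ≤ x := le_trans (by positivity) hqx
  have hterm : ∀ i ∈ range s,
      s.choose (i + 1) * potentialWeight q (i + 1) * x ^ (s - (i + 1)) ≤
        s * x ^ (s - 1) * (1 / 2) ^ i := by
    intro i hi
    have hchoose : (s.choose (i + 1) * (i + 1)! : ℝ) ≤ s ^ (i + 1) := by
      exact_mod_cast (mul_comm (s.choose (i + 1)) _ ▸ Nat.descFactorial_eq_factorial_mul_choose s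
        (i + 1)) ▸ Nat.descFactorial_le_pow s (i + 1)
    have hxpow : x ^ (s - 1) = x ^ i * x ^ (s - (i + 1)) := by
      rw [← pow_add]; congr 1; have := mem_range.1 hi; omega
    calc s.choose (i + 1) * potentialWeight q (i + 1) * x ^ (s - (i + 1))
        = (s.choose (i + 1) * (i + 1)! : ℝ) * q ^ i * x ^ (s - (i + 1)) := by
          simp only [potentialWeight, add_tsub_cancel_right]; ring
      _ ≤ s ^ (i + 1) * q ^ i * x ^ (s - (i + 1)) := by gcongr
      _ = s * (s * q) ^ i * x ^ (s - (i + 1)) := by ring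
      _ ≤ s * (x / 2) ^ i * x ^ (s - (i + 1)) := by gcongr; linarith
      _ = s * x ^ (s - 1) * (1 / 2) ^ i := by rw [hxpow]; ring
  rw [sum_range_succ', Nat.choose_zero_right, Nat.cast_one, potentialWeight_zero, tsub_zero]
  calc ∑ i ∈ range s, s.choose (i + 1) * potentialWeight q (i + 1) * x ^ (s - (i + 1)) +
        1 * 1 * x ^ s
      ≤ s * x ^ (s - 1) * ∑ i ∈ range s, (1 / 2 : ℝ) ^ i + x ^ s := by
        rw [mul_sum]; linarith [sum_le_sum hterm]
    _ ≤ x ^ s + 2 * s * x ^ (s - 1) := by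
        linarith [mul_le_mul_of_nonneg_left (sum_geometric_two_le s)
          (by positivity : (0 : ℝ) ≤ s * x ^ (s - 1))]

end Weight

section Recoloring

variable {V α ι : Type*} [Fintype V] [DecidableEq α] [DecidableEq ι]
  (part : V → ι) (L : V → Finset α) (g : α → ι)

def ownColors (v : V) : Finset α := (L v).filter fun c => g c = part v

def badVertices : Finset V := univ.filter fun v => ownColors part L g v = ∅

noncomputable def potential (q : ℝ) (R : Finset α) : ℝ :=
  ∑ v, potentialWeight q #(ownColors part L g v \ R)

def criticalColors (R : Finset α) : Finset α :=
  (univ.filter fun u => #(ownColors part L g u \ R) = 1).biUnion fun u => ownColors part L g u \ R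

variable {part L g} {q : ℝ} {s : ℕ}

omit [Fintype V] [DecidableEq α] in
@[simp] lemma mem_ownColors {v : V} {c : α} :
    c ∈ ownColors part L g v ↔ c ∈ L v ∧ g c = part v := mem_filter

lemma nonempty_ownColors_of_notMem_badVertices {v : V} (hv : v ∉ badVertices part L g) :
    (ownColors part L g v).Nonempty := by
  simpa [badVertices, nonempty_iff_ne_empty] using hv

lemma potential_nonneg (hq : 0 ≤ q) (R : Finset α) : 0 ≤ potential part L g q R :=
  sum_nonneg fun _ _ => potentialWeight_nonneg hq _

lemma ne_singleton_of_notMem_criticalColors {R : Finset α} {c : α}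
    (hc : c ∉ criticalColors part L g R) (u : V) : ownColors part L g u \ R ≠ {c} := by
  intro h
  exact hc (mem_biUnion.2 ⟨u, by simp [h], by simp [h]⟩)

lemma card_criticalColors_le (hq : 0 ≤ q) (R : Finset α) :
    (#(criticalColors part L g R) : ℝ) ≤ potential part L g q R :=
  calc (#(criticalColors part L g R) : ℝ)
      ≤ #(univ.filter fun u => #(ownColors part L g u \ R) = 1) := by
        unfold criticalColors
        exact_mod_cast (card_biUnion_le_card_mul _ _ 1 fun u hu =>
          le_of_eq (mem_filter.1 hu).2).trans (mul_one _).le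
    _ = ∑ u ∈ univ.filter fun u => #(ownColors part L g u \ R) = 1,
          potentialWeight q #(ownColors part L g u \ R) := by
        rw [card_eq_sum_ones, Nat.cast_sum]
        exact sum_congr rfl fun u hu => by simp [(mem_filter.1 hu).2]
    _ ≤ potential part L g q R :=
        sum_le_sum_of_subset_of_nonneg (filter_subset _ _) fun _ _ _ =>
          potentialWeight_nonneg hq _

lemma sum_potential_insert_sub_le (hq : 0 < q) (R A : Finset α)
    (hA : Disjoint A (criticalColors part L g R)) :
    ∑ c ∈ A, (potential part L g q (insert c R) - potential part L g q R) ≤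
      potential part L g q R / q := by
  simp only [potential, ← sum_sub_distrib, sdiff_insert]
  rw [sum_comm, sum_div]
  exact sum_le_sum fun u _ => sum_potentialWeight_erase_sub_le hq _ _ fun c hc =>
    ne_singleton_of_notMem_criticalColors (disjoint_left.1 hA hc) u

/-- Average the increase of the potential over the at least `s / 2` colors of `L v` that are
neither used nor critical. -/
lemma exists_next_color (hq : 0 < q) {v : V} (hv : #(L v) = s) {R : Finset α}
    (hR : #R + potential part L g q R < s / 2) :
    ∃ c ∈ L v, c ∉ R ∧ c ∉ criticalColors part L g R ∧
      potential part L g q (insert c R) ≤ potential part L g q R * (1 + 2 / (q * s)) := by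
  set P := potential part L g q R
  set A := L v \ (R ∪ criticalColors part L g R)
  have hA : (s : ℝ) / 2 < #A := by
    have h1 : s ≤ #A + (#R + #(criticalColors part L g R)) := by
      have := card_union_le R (criticalColors part L g R)
      have : #(L v) ≤ #A + #(R ∪ criticalColors part L g R) := card_le_card_sdiff_add_card
      omega
    have h2 := card_criticalColors_le (part := part) (L := L) (g := g) hq.le R
    have h3 : (s : ℝ) ≤ #A + (#R + #(criticalColors part L g R)) := by exact_mod_cast h1
    linarith
  have hs : (0 : ℝ) < s := by linarith [potential_nonneg (part := part) (L := L) (g := g) hq.le R]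
  have hAne : A.Nonempty := card_pos.1 (by exact_mod_cast (show (0 : ℝ) < #A by linarith))
  obtain ⟨c, hcA, hc⟩ := exists_le_of_sum_le hAne
    (f := fun c => potential part L g q (insert c R) - P) (g := fun _ => P / q / #A) <| by
    rw [sum_const, nsmul_eq_mul, mul_div_cancel₀ _ (by positivity)]
    exact sum_potential_insert_sub_le hq R A
      (disjoint_sdiff_self_left.mono_right subset_union_right)
  simp only [A, mem_sdiff, mem_union, not_or] at hcA
  refine ⟨c, hcA.1, hcA.2.1, hcA.2.2, ?_⟩
  have hPq : 0 ≤ P / q := div_nonneg (potential_nonneg hq.le R) hq.le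
  calc potential part L g q (insert c R) ≤ P + P / q / #A := by linarith
    _ ≤ P + P / q / (s / 2) := by gcongr
    _ = P * (1 + 2 / (q * s)) := by field_simp

lemma nonempty_sdiff_insert {R : Finset α} {c : α} (hc : c ∉ criticalColors part L g R) {u : V}
    (hu : (ownColors part L g u \ R).Nonempty) :
    (ownColors part L g u \ insert c R).Nonempty := by
  rw [sdiff_insert, nonempty_iff_ne_empty, Ne, erase_eq_empty_iff, not_or]
  exact ⟨hu.ne_empty, ne_singleton_of_notMem_criticalColors hc u⟩

/-- The budget is invariant under a step of `exists_next_color`: `#R + #F` is unchanged and the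
potential grows by at most the factor paid for one vertex of `F`. -/
lemma exists_injOn_of_budget (hq : 0 < q) (hs : 0 < s) (hL : ∀ v, #(L v) = s)
    (F : Finset V) (R : Finset α)
    (hR : ∀ u, (ownColors part L g u).Nonempty → (ownColors part L g u \ R).Nonempty)
    (hbudget : #R + #F + potential part L g q R * (1 + 2 / (q * s)) ^ #F ≤ s / 2) :
    ∃ σ : V → α, (∀ v ∈ F, σ v ∈ L v \ R) ∧ Set.InjOn σ F ∧
      ∀ u, (ownColors part L g u).Nonempty →
        (ownColors part L g u \ (R ∪ F.image σ)).Nonempty := by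
  classical
  induction F using Finset.induction_on generalizing R with
  | empty =>
    exact ⟨fun v => (card_pos.1 ((hL v).symm ▸ hs)).choose, by simp, by simp,
      by simpa using hR⟩
  | @insert v F hvF ih =>
    set K := 1 + 2 / (q * s)
    have hK : 1 ≤ K := le_add_of_nonneg_right (by positivity)
    have hP := potential_nonneg (part := part) (L := L) (g := g) hq.le R
    rw [card_insert_of_notMem hvF, pow_succ] at hbudget
    have hRP : #R + potential part L g q R < s / 2 := by
      have : potential part L g q R ≤ potential part L g q R * (K ^ #F * K) :=
        le_mul_of_one_le_right hP (one_le_mul_of_one_le_of_one_le (one_le_pow₀ hK) hK)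
      push_cast at hbudget
      linarith
    obtain ⟨c, hcL, hcR, hcC, hcP⟩ := exists_next_color hq (hL v) hRP
    obtain ⟨σ, hσL, hσinj, hσown⟩ := ih (insert c R)
      (fun u hu => nonempty_sdiff_insert hcC (hR u hu)) <| by
        have := mul_le_mul_of_nonneg_right hcP (pow_nonneg (zero_le_one.trans hK) #F)
        rw [card_insert_of_notMem hcR]
        push_cast at hbudget ⊢
        linarith
    have hσv : ∀ w ∈ F, Function.update σ v c w = σ w := fun w hw =>
      Function.update_of_ne (ne_of_mem_of_not_mem hw hvF) _ _
    have himage : (insert v F).image (Function.update σ v c) = insert c (F.image σ) := by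
      rw [image_insert, Function.update_self, image_congr hσv]
    refine ⟨Function.update σ v c, ?_, ?_, ?_⟩
    · simp only [forall_mem_insert, Function.update_self, mem_sdiff]
      exact ⟨⟨hcL, hcR⟩, fun w hw => by
        rw [hσv w hw]; exact ⟨(mem_sdiff.1 (hσL w hw)).1,
          fun h => (mem_sdiff.1 (hσL w hw)).2 (mem_insert_of_mem h)⟩⟩
    · rw [coe_insert, Set.injOn_insert (by simpa using hvF), Function.update_self]
      refine ⟨hσinj.congr fun w hw => (hσv w hw).symm, ?_⟩
      rintro ⟨w, hw, hwc⟩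
      rw [hσv w hw] at hwc
      exact (mem_sdiff.1 (hσL w hw)).2 (hwc ▸ mem_insert_self c R)
    · intro u hu
      rw [himage, union_insert, ← insert_union]
      exact hσown u hu

/-- Bad vertices get the distinct colors of `exists_injOn_of_budget`, every other vertex an own
color still free; own colors of different parts differ since `g` maps them to their parts. -/
lemma exists_choice_of_budget (hq : 0 < q) (hs : 0 < s) (hL : ∀ v, #(L v) = s)
    (hbudget : #(badVertices part L g) +
      potential part L g q ∅ * (1 + 2 / (q * s)) ^ #(badVertices part L g) ≤ s / 2) :
    ∃ f : V → α, (∀ v, f v ∈ L v) ∧ ∀ u v, part u ≠ part v → f u ≠ f v := by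
  classical
  set B := badVertices part L g
  obtain ⟨σ, hσL, hσinj, hσown⟩ :=
    exists_injOn_of_budget hq hs hL B ∅ (by simp) (by simpa using hbudget)
  have hgood : ∀ v ∉ B, ∃ c ∈ ownColors part L g v, c ∉ B.image σ := fun v hv => by
    simpa [Finset.Nonempty] using hσown v (nonempty_ownColors_of_notMem_badVertices hv)
  choose τ hτown hτσ using hgood
  refine ⟨fun v => if h : v ∈ B then σ v else τ v h, fun v => ?_, fun u v huv => ?_⟩
  · dsimp only
    split_ifs with hv
    exacts [(mem_sdiff.1 (hσL v hv)).1, (mem_ownColors.1 (hτown v hv)).1]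
  by_cases hu : u ∈ B <;> by_cases hv : v ∈ B <;> simp only [hu, hv, dite_true, dite_false]
  · exact fun h => huv (congrArg part (hσinj hu hv h))
  · exact fun h => hτσ v hv (h ▸ mem_image_of_mem σ hu)
  · exact fun h => hτσ u hu (h ▸ mem_image_of_mem σ hv)
  · intro h
    apply huv
    rw [← (mem_ownColors.1 (hτown u hu)).2, h, (mem_ownColors.1 (hτown v hv)).2]

end Recoloring

section Counting

open Fintype

variable {V α ι : Type*} [Fintype V] [Fintype α] [DecidableEq α] [Fintype ι] [DecidableEq ι]
  {part : V → ι} {L : V → Finset α}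

omit [Fintype V] in
lemma card_ownColors_eq (v : V) {A : Finset α} (hA : A ⊆ L v) :
    #{g : α → ι | ownColors part L g v = A} =
      (card ι - 1) ^ (#(L v) - #A) * card ι ^ (card α - #(L v)) := by
  have hpi : ({g : α → ι | ownColors part L g v = A} : Finset _) = piFinset fun c =>
      if c ∈ A then {part v} else if c ∈ L v then univ.erase (part v) else univ := by
    ext g
    simp only [mem_filter, mem_univ, true_and, mem_piFinset, Finset.ext_iff, mem_ownColors]
    refine forall_congr' fun c => ?_
    by_cases h1 : c ∈ A
    · simp [h1, hA h1]
    · by_cases h2 : c ∈ L v <;> simp [h1, h2]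
  simp only [hpi, card_piFinset, apply_ite card, card_singleton, card_erase_of_mem (mem_univ _),
    prod_ite, prod_const_one, one_mul, prod_const, filter_filter]
  congr 2
  · rw [← card_sdiff_of_subset hA]
    congr 1; ext c; simp [and_comm]
  · rw [← Finset.card_univ, ← card_sdiff_of_subset (subset_univ (L v))]
    congr 1; ext c; simp only [mem_filter, mem_univ, true_and, mem_sdiff]
    exact ⟨fun h => h.2, fun h => ⟨fun hc => h (hA hc), h⟩⟩

omit [Fintype V] in
lemma cast_card_ownColors_eq (v : V) {A : Finset α} (hA : A ⊆ L v) :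
    (#{g : α → ι | ownColors part L g v = A} : ℝ) =
      ((card ι : ℝ) - 1) ^ (#(L v) - #A) / card ι ^ #(L v) *
        card ι ^ card α := by
  have hk : 1 ≤ card ι := Fintype.card_pos_iff.2 ⟨part v⟩
  rw [card_ownColors_eq v hA, ← Nat.sub_add_cancel (card_le_univ (L v)), Nat.add_sub_cancel]
  push_cast [hk, pow_add]
  field_simp

variable {s : ℕ}

lemma sum_card_badVertices (hL : ∀ v, #(L v) = s) :
    ∑ g : α → ι, (#(badVertices part L g) : ℝ) = card V *
      (((card ι : ℝ) - 1) ^ s / card ι ^ s * card ι ^ card α) := by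
  simp only [badVertices, card_filter, Nat.cast_sum, Nat.cast_ite, Nat.cast_one, Nat.cast_zero]
  rw [sum_comm]
  simp only [sum_boole, cast_card_ownColors_eq _ (empty_subset _), hL, Finset.card_empty, tsub_zero,
    sum_const, Finset.card_univ, nsmul_eq_mul]

omit [Fintype V] in
lemma sum_potentialWeight_card_ownColors (q : ℝ) (v : V) (hv : #(L v) = s) :
    ∑ g : α → ι, potentialWeight q #(ownColors part L g v) =
      (∑ j ∈ range (s + 1), s.choose j * potentialWeight q j * ((card ι : ℝ) - 1) ^ (s - j))
        / card ι ^ s * card ι ^ card α := by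
  rw [← sum_fiberwise_of_maps_to (t := (L v).powerset) (g := fun g => ownColors part L g v)
    fun g _ => mem_powerset.2 (filter_subset _ _)]
  calc ∑ A ∈ (L v).powerset, ∑ g with ownColors part L g v = A,
        potentialWeight q #(ownColors part L g v)
      = ∑ A ∈ (L v).powerset, potentialWeight q #A * ((card ι : ℝ) - 1) ^ (s - #A)
          / card ι ^ s * card ι ^ card α := by
        refine Finset.sum_congr rfl fun A hA => ?_
        rw [Finset.sum_congr rfl fun g hg => by rw [(mem_filter.1 hg).2], sum_const, nsmul_eq_mul,
          cast_card_ownColors_eq v (mem_powerset.1 hA), hv]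
        ring
    _ = _ := by
        rw [sum_powerset_apply_card (fun j => potentialWeight q j * ((card ι : ℝ) - 1) ^ (s - j)
          / card ι ^ s * card ι ^ card α), hv, sum_div, sum_mul]
        exact Finset.sum_congr rfl fun j _ => by rw [nsmul_eq_mul]; ring

lemma sum_potential_empty_le {q : ℝ} (hq : 0 ≤ q) (hL : ∀ v, #(L v) = s)
    (hqs : 2 * s * q ≤ card ι - 1) :
    ∑ g : α → ι, potential part L g q ∅ ≤ card V *
      ((((card ι : ℝ) - 1) ^ s + 2 * s * ((card ι : ℝ) - 1) ^ (s - 1)) /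
        card ι ^ s * card ι ^ card α) := by
  simp only [potential, sdiff_empty]
  rw [sum_comm, ← nsmul_eq_mul, ← Finset.card_univ, ← sum_const]
  exact sum_le_sum fun v _ => (sum_potentialWeight_card_ownColors q v (hL v)).trans_le <|
    mul_le_mul_of_nonneg_right (div_le_div_of_nonneg_right
      (sum_choose_mul_potentialWeight_le hq hqs) (by positivity)) (by positivity)

end Counting

section Choice

open Fintype

variable {V α ι : Type*} [Fintype V] [Fintype α] [DecidableEq α] [Fintype ι] [DecidableEq ι]
  {part : V → ι} {L : V → Finset α} {s : ℕ}

/-- The mean of `8 * #bad / k + 8 * potential / s` over all `g : α → ι` is below `1`. -/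
lemma exists_assignment_of_card_mul_lt (hk : 2 ≤ card ι) (hks : card ι ≤ s)
    (hL : ∀ v, #(L v) = s)
    (hV : card V * ((card ι : ℝ) - 1) ^ s * 48 < (card ι : ℝ) ^ (s + 1)) :
    ∃ g : α → ι, 8 * (#(badVertices part L g) : ℝ) < card ι ∧
      8 * potential part L g (card ι / (4 * s)) ∅ < s := by
  have hk2 : (2 : ℝ) ≤ card ι := by exact_mod_cast hk
  have hks' : (card ι : ℝ) ≤ s := by exact_mod_cast hks
  have hs : 0 < (s : ℝ) := by linarith
  have hq2 : 2 * s * (card ι / (4 * s)) = (card ι : ℝ) / 2 := by field_simp; ring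
  set k : ℝ := card ι
  set x : ℝ := k - 1
  set q : ℝ := k / (4 * s)
  set V' : ℝ := card V
  have hx : 0 < x := by linarith
  have hq : 0 ≤ q := by positivity
  have hqs : 2 * s * q ≤ x := by linarith
  have hsum :
      ∑ g : α → ι, (8 / k * #(badVertices part L g) + 8 / s * potential part L g q ∅) <
        ∑ _g : α → ι, (1 : ℝ) := by
    have h1 : x ^ s / s ≤ x ^ s / k :=
      div_le_div_of_nonneg_left (by positivity) (by positivity) hks'
    have h2 : x ^ (s - 1) ≤ 2 * (x ^ s / k) := by
      rw [mul_div_assoc', le_div_iff₀ (by positivity),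
        ← Nat.sub_add_cancel (show 1 ≤ s by omega), pow_succ, Nat.add_sub_cancel]
      nlinarith [pow_pos hx (s - 1)]
    have h3 : V' * (48 * (x ^ s / k)) < k ^ s := by
      rw [mul_div_assoc', mul_div_assoc', div_lt_iff₀ (by positivity), ← pow_succ]
      linarith
    have hT : 0 < k ^ card α / k ^ s := by positivity
    rw [sum_add_distrib, ← mul_sum, ← mul_sum, sum_card_badVertices hL, sum_const,
      Finset.card_univ, Fintype.card_fun, nsmul_eq_mul, mul_one]
    push_cast
    calc 8 / k * (V' * (x ^ s / k ^ s * k ^ card α)) +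
          8 / s * ∑ g : α → ι, potential part L g q ∅
        ≤ 8 / k * (V' * (x ^ s / k ^ s * k ^ card α)) +
          8 / s * (V' * ((x ^ s + 2 * s * x ^ (s - 1)) / k ^ s * k ^ card α)) := by
          gcongr; exact sum_potential_empty_le hq hL hqs
      _ = V' * (8 * (x ^ s / k) + 8 * (x ^ s / s) + 16 * x ^ (s - 1)) * (k ^ card α / k ^ s) := by
          field_simp; ring
      _ ≤ V' * (48 * (x ^ s / k)) * (k ^ card α / k ^ s) := by gcongr; linarith
      _ < k ^ s * (k ^ card α / k ^ s) := by gcongr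
      _ = k ^ card α := by field_simp
  obtain ⟨g, -, hg⟩ := exists_lt_of_sum_lt hsum
  have hbad : 0 ≤ 8 / k * #(badVertices part L g) := by positivity
  have hpot : 0 ≤ 8 / s * potential part L g q ∅ :=
    mul_nonneg (by positivity) (potential_nonneg hq ∅)
  refine ⟨g, ?_, ?_⟩
  · have : 8 / k * #(badVertices part L g) < 1 := by linarith
    rwa [div_mul_eq_mul_div, div_lt_one (by positivity)] at this
  · have : 8 / s * potential part L g q ∅ < 1 := by linarith
    rwa [div_mul_eq_mul_div, div_lt_one hs] at this

theorem exists_choice_of_card_mul_lt (hk : 2 ≤ card ι) (hks : card ι ≤ s)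
    (hL : ∀ v, #(L v) = s)
    (hV : card V * ((card ι : ℝ) - 1) ^ s * 48 < (card ι : ℝ) ^ (s + 1)) :
    ∃ f : V → α, (∀ v, f v ∈ L v) ∧ ∀ u v, part u ≠ part v → f u ≠ f v := by
  obtain ⟨g, hbad, hpot⟩ :=
    exists_assignment_of_card_mul_lt (L := L) (part := part) hk hks hL hV
  have hk2 : (2 : ℝ) ≤ card ι := by exact_mod_cast hk
  have hks' : (card ι : ℝ) ≤ s := by exact_mod_cast hks
  have hs : (0 : ℝ) < s := by linarith
  refine exists_choice_of_budget (g := g) (q := card ι / (4 * s)) (by positivity) (by omega) hL ?_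
  set B := #(badVertices part L g)
  have hfactor : (1 + 2 / (card ι / (4 * s) * s)) ^ B ≤ (3 : ℝ) := by
    have h8 : 2 / (card ι / (4 * s) * s) = 8 / (card ι : ℝ) := by field_simp; ring
    calc (1 + 2 / (card ι / (4 * s) * s)) ^ B ≤ Real.exp (8 / card ι) ^ B := by
          rw [h8, add_comm]; gcongr; exact Real.add_one_le_exp _
      _ = Real.exp (B * (8 / card ι)) := (Real.exp_nat_mul _ _).symm
      _ ≤ Real.exp 1 := Real.exp_le_exp.2 <| by
          rw [mul_div_assoc', div_le_one (by positivity)]; linarith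
      _ ≤ 3 := by linarith [Real.exp_one_lt_d9]
  nlinarith [potential_nonneg (part := part) (L := L) (g := g)
    (show 0 ≤ (card ι : ℝ) / (4 * s) by positivity) ∅]

end Choice

theorem choosable_Kmk {m k s : ℕ} (hk : 2 ≤ k) (hks : k ≤ s)
    (hm : (m : ℝ) * (k - 1) ^ s * 48 < (k : ℝ) ^ s) : Choosable (Kmk m k) s := by
  classical
  intro L hL
  set C := univ.biUnion L
  have hLC : ∀ v, ∀ c ∈ L v, c ∈ C := fun v c hc => mem_biUnion.2 ⟨v, mem_univ v, hc⟩
  obtain ⟨f, hfL, hf⟩ := exists_choice_of_card_mul_lt (part := Sigma.fst)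
    (L := fun v => (L v).subtype (· ∈ C)) (by simpa using hk) (by simpa using hks)
    (fun v => by rw [card_subtype, filter_true_of_mem (hLC v), hL]) <| by
      simp only [Fintype.card_sigma, Fintype.card_fin, sum_const, Finset.card_univ, smul_eq_mul]
      push_cast
      rw [pow_succ]
      nlinarith [(show (0 : ℝ) < k by positivity)]
  exact ⟨fun v => f v, fun v => mem_subtype.1 (hfL v),
    fun u v huv h => hf u v huv (Subtype.ext h)⟩

lemma sub_one_pow_le_exp {k : ℝ} (hk : 1 ≤ k) (s : ℕ) :
    (k - 1) ^ s ≤ k ^ s * Real.exp (-(s / k)) := by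
  have hk0 : 0 < k := by linarith
  calc (k - 1) ^ s = k ^ s * (1 - 1 / k) ^ s := by rw [← mul_pow]; field_simp
    _ ≤ k ^ s * Real.exp (-(1 / k)) ^ s := by
        gcongr
        · exact sub_nonneg.2 ((div_le_one hk0).2 hk)
        · linarith [Real.add_one_le_exp (-(1 / k))]
    _ = k ^ s * Real.exp (-(s / k)) := by rw [← Real.exp_nat_mul]; ring_nf

lemma one_le_log_add_log_log_add_twenty {m : ℕ} (hm : 2 ≤ m) :
    1 ≤ Real.log m + Real.log (Real.log m) + 20 := by
  have hlog : 1 / 2 < Real.log m := by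
    linarith [Real.log_two_gt_d9,
      Real.log_le_log two_pos (show (2 : ℝ) ≤ m by exact_mod_cast hm)]
  have := Real.one_sub_inv_le_log_of_pos (show 0 < Real.log m by linarith)
  have : (Real.log m)⁻¹ < 2 := by rw [inv_lt_comm₀ (by linarith) two_pos]; linarith
  linarith

lemma mul_sub_one_pow_mul_lt {m k s : ℕ} (hm : 2 ≤ m) (hk : 2 ≤ k)
    (hs : k * (Real.log m + Real.log (Real.log m) + 20) < s + 1) :
    (m : ℝ) * (k - 1) ^ s * 48 < (k : ℝ) ^ s := by
  have hk2 : (2 : ℝ) ≤ k := by exact_mod_cast hk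
  have hlog2 : Real.log 2 ≤ Real.log m := Real.log_le_log two_pos (by exact_mod_cast hm)
  have hlogm : 0.69 < Real.log m := by linarith [Real.log_two_gt_d9]
  have hm0 : (0 : ℝ) < m := by positivity
  have hsk : Real.log m + Real.log (Real.log m) + 20 - 1 / 2 < s / k := by
    rw [lt_div_iff₀ (by positivity)]
    nlinarith
  have hexp : (m : ℝ) * Real.exp (-(s / k)) < Real.exp (-(39 / 2)) / Real.log m := by
    calc (m : ℝ) * Real.exp (-(s / k))
        < Real.exp (Real.log m) * Real.exp (-(39 / 2) - Real.log m - Real.log (Real.log m)) := by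
          rw [Real.exp_log hm0]; gcongr; linarith
      _ = Real.exp (-(39 / 2)) / Real.log m := by
          rw [Real.exp_sub, Real.exp_sub, Real.exp_log hm0, Real.exp_log (by linarith)]
          field_simp
  have h39 : 48 * Real.exp (-(39 / 2)) < Real.log m := by
    rw [Real.exp_neg, ← div_eq_mul_inv, div_lt_iff₀ (Real.exp_pos _)]
    nlinarith [Real.quadratic_le_exp_of_nonneg (show (0 : ℝ) ≤ 39 / 2 by norm_num)]
  calc (m : ℝ) * (k - 1) ^ s * 48 ≤ (m : ℝ) * (k ^ s * Real.exp (-(s / k))) * 48 := by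
        gcongr; exact sub_one_pow_le_exp (by linarith) s
    _ = (k : ℝ) ^ s * (48 * (m * Real.exp (-(s / k)))) := by ring
    _ < (k : ℝ) ^ s * 1 := by
        gcongr
        calc 48 * (m * Real.exp (-(s / k))) < 48 * (Real.exp (-(39 / 2)) / Real.log m) := by
              gcongr
          _ < 1 := by rw [mul_div_assoc', div_lt_one (by linarith)]; exact h39
    _ = (k : ℝ) ^ s := mul_one _

end MultipartiteChoice

/-- **Upper bound for the choice number of `K_{m*k}`.** For all `m, k ≥ 2`,
`ch(K_{m*k}) ≤ k·(ln m + ln ln m + 20)`. -/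
theorem choiceNumber_Kmk_upper (m k : ℕ) (hm : 2 ≤ m) (hk : 2 ≤ k) :
    (choiceNumber (Kmk m k) : ℝ) ≤ k * (Real.log m + Real.log (Real.log m) + 20) := by
  set B := Real.log m + Real.log (Real.log m) + 20
  have hkB : (k : ℝ) ≤ k * B :=
    le_mul_of_one_le_right k.cast_nonneg (MultipartiteChoice.one_le_log_add_log_log_add_twenty hm)
  have hchoosable : Choosable (Kmk m k) ⌊k * B⌋₊ :=
    MultipartiteChoice.choosable_Kmk hk (Nat.le_floor hkB)
      (MultipartiteChoice.mul_sub_one_pow_mul_lt hm hk (Nat.lt_floor_add_one _))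
  calc (choiceNumber (Kmk m k) : ℝ) ≤ ⌊k * B⌋₊ := by exact_mod_cast Nat.sInf_le hchoosable
    _ ≤ k * B := Nat.floor_le (k.cast_nonneg.trans hkB)
end

section
/- For every prime p and every positive integer n divisible by p, K(n,p) ≥ p^n · ((n/p)!)^p / n!. Consequently, for every fixed prime p, as n tends to infinity, K(n,p) ≥ (1+o(1)) · ((2π)^{(p-1)/2} / p^{p/2}) · n^{(p-1)/2}. -/
open scoped Real

/-- `u` is a vector all of whose coordinates are powers of the primitive `p`-th root of unity
`w = e^{2πi/p}`, i.e. a member of the set `B`. -/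
def IsRootVector (p n : ℕ) (u : Fin n → ℂ) : Prop :=
  ∀ i, ∃ j < p, u i = Complex.exp (2 * Real.pi * Complex.I / p) ^ j

/-- `K(n,p)`: the minimum `k` such that there are `v_1, …, v_k ∈ B` so that every `u ∈ B` is
orthogonal (with respect to the bilinear scalar product) to some `v_j`. -/
noncomputable def balancingNumber (n p : ℕ) : ℕ :=
  sInf {k | ∃ v : Fin k → Fin n → ℂ,
    (∀ j, IsRootVector p n (v j)) ∧
    ∀ u : Fin n → ℂ, IsRootVector p n u → ∃ j, ∑ i, v j i * u i = 0}

/-!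
Write `u = (w ^ aᵢ)` and `v = (w ^ bᵢ)`. Since the minimal polynomial of `w` over `ℚ` is
`1 + X + ⋯ + X ^ (p - 1)`, the sum `v · u = ∑ w ^ (aᵢ + bᵢ)` vanishes only if every residue
occurs exactly `n / p` times in `a + b`. There are at most `n! / ((n / p)!) ^ p` such balanced
exponent vectors, so each `v_j` is orthogonal to at most that many of the `pⁿ` vectors `u`.
Stirling's formula turns the resulting bound into the asymptotic one.
-/

open Finset Polynomial
open scoped Nat

theorem IsPrimitiveRoot.eq_of_sum_natCast_mul_pow_eq_zero {K : Type*} [Field K] [CharZero K]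
    {p : ℕ} [hp : Fact p.Prime] {ζ : K} (hζ : IsPrimitiveRoot ζ p) {d : ZMod p → ℕ}
    (h : ∑ r, (d r : K) * ζ ^ r.val = 0) (r s : ZMod p) : d r = d s := by
  set f : ℚ[X] := ∑ r, C (d r : ℚ) * X ^ r.val
  have hcoeff (r : ZMod p) : f.coeff r.val = d r := by
    simp [f, finsetSum_coeff, (ZMod.val_injective p).eq_iff]
  have hdvd : cyclotomic p ℚ ∣ f := by
    rw [cyclotomic_eq_minpoly_rat hζ hp.out.pos]
    exact minpoly.dvd ℚ ζ (by simpa [f] using h)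
  have hdeg : f.natDegree ≤ (cyclotomic p ℚ).natDegree := by
    rw [natDegree_cyclotomic, Nat.totient_prime hp.out]
    refine natDegree_sum_le_of_forall_le _ _ fun r _ => (natDegree_C_mul_X_pow_le _ _).trans ?_
    have := r.val_lt
    omega
  obtain ⟨a, hf⟩ : ∃ a, f = cyclotomic p ℚ * C a :=
    ⟨_, eq_mul_leadingCoeff_of_monic_of_dvd_of_natDegree_le (cyclotomic.monic p ℚ) hdvd hdeg⟩
  have hconst (r : ZMod p) : (d r : ℚ) = a := by
    rw [← hcoeff, hf, coeff_mul_C, cyclotomic_prime, finsetSum_coeff]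
    simp [coeff_X_pow, r.val_lt]
  exact_mod_cast (hconst r).trans (hconst s).symm

theorem AddChar.card_fiber_eq_of_sum_eq_zero {K : Type*} [Field K] [CharZero K]
    {p : ℕ} [hp : Fact p.Prime] (ψ : AddChar (ZMod p) K) (hψ : IsPrimitiveRoot (ψ 1) p)
    {ι : Type*} [Fintype ι] {c : ι → ZMod p} (h : ∑ i, ψ (c i) = 0) (r : ZMod p) :
    #{i | c i = r} = Fintype.card ι / p := by
  have hpow (s : ZMod p) : ψ s = ψ 1 ^ s.val := by
    rw [← AddChar.map_nsmul_eq_pow, nsmul_one, ZMod.natCast_zmod_val]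
  have hfib : ∑ s, (#{i | c i = s} : K) * ψ 1 ^ s.val = 0 := by
    rw [← h, ← Finset.sum_fiberwise univ c]
    refine Finset.sum_congr rfl fun s _ => ?_
    rw [Finset.sum_congr rfl fun i hi => by rw [(Finset.mem_filter.1 hi).2, hpow],
      Finset.sum_const, nsmul_eq_mul]
  have hall := hψ.eq_of_sum_natCast_mul_pow_eq_zero hfib
  have htotal : p * #{i | c i = r} = Fintype.card ι := by
    have := Finset.card_eq_sum_card_fiberwise (s := univ) (t := univ) (f := c) (by simp)
    simpa [hall _ r, ZMod.card] using this.symm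
  rw [← htotal, Nat.mul_div_cancel_left _ hp.out.pos]

theorem Fintype.card_le_mul_card_of_forall_exists_add_mem {G : Type*} [AddGroup G] [Fintype G]
    [DecidableEq G] {k : ℕ} (S : Finset G) (b : Fin k → G) (h : ∀ a, ∃ j, a + b j ∈ S) :
    Fintype.card G ≤ k * #S := by
  calc Fintype.card G = #(univ : Finset G) := rfl
    _ ≤ #(univ.biUnion fun j => S.image (· - b j)) :=
        card_le_card fun a _ => by
          obtain ⟨j, hj⟩ := h a
          exact mem_biUnion.2
            ⟨j, mem_univ j, mem_image.2 ⟨a + b j, hj, add_sub_cancel_right a _⟩⟩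
    _ ≤ #(univ : Finset (Fin k)) * #S := card_biUnion_le_card_mul _ _ _ fun j _ => card_image_le
    _ = k * #S := by rw [card_univ, Fintype.card_fin]

theorem Fintype.card_filter_forall_card_fiber_eq_mul_factorial_pow_le {ι α : Type*}
    [Fintype ι] [DecidableEq ι] [Fintype α] [DecidableEq α] {m : ℕ}
    (hcard : Fintype.card ι = Fintype.card α * m) :
    #{c : ι → α | ∀ r, #{i | c i = r} = m} * m ! ^ Fintype.card α ≤ (Fintype.card ι)! := by
  set S := ({c : ι → α | ∀ r, #{i | c i = r} = m} : Finset (ι → α))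
  have hequiv (c : S) : ∃ E : ι ≃ α × Fin m, ∀ i, (E i).1 = c.1 i := by
    have hfib (r : α) : {i // c.1 i = r} ≃ Fin m :=
      Fintype.equivFinOfCardEq <| by
        rw [Fintype.card_subtype]; exact (mem_filter.1 c.2).2 r
    refine ⟨(Equiv.sigmaFiberEquiv c.1).symm.trans
      ((Equiv.sigmaCongrRight hfib).trans (Equiv.sigmaEquivProd α (Fin m))), fun i => rfl⟩
  choose E hE using hequiv
  -- A balanced `c` and a relabelling `σ r` of each fibre of `c` give a bijection `ι ≃ α × Fin m`.
  let Φ : S × (α → Equiv.Perm (Fin m)) → (ι ≃ α × Fin m) := fun x =>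
    (E x.1).trans (Equiv.prodShear (Equiv.refl α) x.2)
  have hΦ : Function.Injective Φ := by
    rintro ⟨c, σ⟩ ⟨c', σ'⟩ h
    have hc : c = c' := Subtype.ext <| funext fun i => by
      simpa [Φ, hE] using congrArg Prod.fst (Equiv.congr_fun h i)
    subst hc
    refine Prod.ext rfl (funext fun r => Equiv.ext fun s => ?_)
    obtain ⟨i, hi⟩ := (E c).surjective (r, s)
    simpa [Φ, hi] using congrArg Prod.snd (Equiv.congr_fun h i)
  have e : ι ≃ α × Fin m := Fintype.equivOfCardEq (by simp [hcard])
  simpa [Fintype.card_equiv e, Fintype.card_perm] using Fintype.card_le_of_injective Φ hΦ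

theorem ZMod.stdAddChar_natCast_eq_exp_pow (p : ℕ) [NeZero p] (j : ℕ) :
    ZMod.stdAddChar (j : ZMod p) = Complex.exp (2 * Real.pi * Complex.I / p) ^ j := by
  rw [← Complex.exp_nat_mul, ← Int.cast_natCast, ZMod.stdAddChar_coe]
  congr 1
  push_cast
  ring

theorem ZMod.isPrimitiveRoot_stdAddChar_one (p : ℕ) [NeZero p] :
    IsPrimitiveRoot (ZMod.stdAddChar (1 : ZMod p)) p := by
  have := ZMod.stdAddChar_natCast_eq_exp_pow p 1
  rw [Nat.cast_one, pow_one] at this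
  exact this ▸ Complex.isPrimitiveRoot_exp p (NeZero.ne p)

theorem isRootVector_iff {p n : ℕ} [NeZero p] {u : Fin n → ℂ} :
    IsRootVector p n u ↔ ∃ a : Fin n → ZMod p, u = fun i => ZMod.stdAddChar (a i) := by
  constructor
  · intro h
    choose j _ hj using h
    exact ⟨fun i => j i, funext fun i => by rw [hj, ZMod.stdAddChar_natCast_eq_exp_pow]⟩
  · rintro ⟨a, rfl⟩ i
    exact ⟨(a i).val, (a i).val_lt, by
      rw [← ZMod.stdAddChar_natCast_eq_exp_pow, ZMod.natCast_zmod_val]⟩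

theorem pow_mul_factorial_pow_le_mul_factorial {p n k : ℕ} [Fact p.Prime] (hpn : p ∣ n)
    {v : Fin k → Fin n → ℂ} (hv : ∀ j, IsRootVector p n (v j))
    (hcov : ∀ u, IsRootVector p n u → ∃ j, ∑ i, v j i * u i = 0) :
    p ^ n * (n / p)! ^ p ≤ k * n ! := by
  choose b hb using fun j => isRootVector_iff.1 (hv j)
  set S : Finset (Fin n → ZMod p) := {c | ∀ r, #{i | c i = r} = n / p}
  have hcover (a : Fin n → ZMod p) : ∃ j, a + b j ∈ S := by
    obtain ⟨j, hj⟩ := hcov _ (isRootVector_iff.2 ⟨a, rfl⟩)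
    refine ⟨j, mem_filter.2 ⟨mem_univ _, fun r => ?_⟩⟩
    rw [ZMod.stdAddChar.card_fiber_eq_of_sum_eq_zero (ZMod.isPrimitiveRoot_stdAddChar_one p),
      Fintype.card_fin]
    simpa [hb, AddChar.map_add_eq_mul, mul_comm] using hj
  have hS := Fintype.card_filter_forall_card_fiber_eq_mul_factorial_pow_le (ι := Fin n)
    (α := ZMod p) (m := n / p) (by simp [Nat.mul_div_cancel' hpn])
  have hk := Fintype.card_le_mul_card_of_forall_exists_add_mem S b hcover
  simp only [Fintype.card_fun, ZMod.card, Fintype.card_fin] at hS hk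
  calc p ^ n * (n / p)! ^ p ≤ k * #S * (n / p)! ^ p := Nat.mul_le_mul_right _ hk
    _ = k * (#S * (n / p)! ^ p) := mul_assoc ..
    _ ≤ k * n ! := Nat.mul_le_mul_left _ hS

theorem exists_sum_stdAddChar_mul_eq_zero {p n : ℕ} [hp : Fact p.Prime] (hpn : p ∣ n)
    (a : Fin n → ZMod p) :
    ∃ b : Fin n → ZMod p, ∑ i, ZMod.stdAddChar (b i) * ZMod.stdAddChar (a i) = 0 := by
  have hζ := ZMod.isPrimitiveRoot_stdAddChar_one p
  refine ⟨fun i => (i : ZMod p) - a i, ?_⟩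
  simp only [← AddChar.map_add_eq_mul, sub_add_cancel]
  have hpow (i : ℕ) : ZMod.stdAddChar (i : ZMod p) = ZMod.stdAddChar (1 : ZMod p) ^ i := by
    rw [← AddChar.map_nsmul_eq_pow, nsmul_one]
  obtain ⟨m, rfl⟩ := hpn
  rw [Fin.sum_univ_eq_sum_range (fun i => ZMod.stdAddChar (i : ZMod p)),
    sum_congr rfl fun i _ => hpow i, geom_sum_eq (hζ.ne_one hp.out.one_lt), pow_mul,
    hζ.pow_eq_one, one_pow, sub_self, zero_div]

theorem exists_balancing_family {p n : ℕ} [Fact p.Prime] (hpn : p ∣ n) :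
    ∃ k, ∃ v : Fin k → Fin n → ℂ, (∀ j, IsRootVector p n (v j)) ∧
      ∀ u, IsRootVector p n u → ∃ j, ∑ i, v j i * u i = 0 := by
  let e := Fintype.equivFin (Fin n → ZMod p)
  refine ⟨_, fun j i => ZMod.stdAddChar (e.symm j i),
    fun j => isRootVector_iff.2 ⟨_, rfl⟩, ?_⟩
  rintro u hu
  obtain ⟨a, rfl⟩ := isRootVector_iff.1 hu
  obtain ⟨b, hb⟩ := exists_sum_stdAddChar_mul_eq_zero hpn a
  exact ⟨e b, by simpa using hb⟩

theorem pow_mul_factorial_pow_div_factorial_le_balancingNumber {p n : ℕ} (hp : p.Prime)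
    (hpn : p ∣ n) :
    (p : ℝ) ^ n * ((n / p)! : ℝ) ^ p / (n ! : ℝ) ≤ balancingNumber n p := by
  have := Fact.mk hp
  obtain ⟨v, hv, hcov⟩ := Nat.sInf_mem (exists_balancing_family hpn)
  rw [div_le_iff₀ (by positivity)]
  exact_mod_cast pow_mul_factorial_pow_le_mul_factorial hpn hv hcov

open Filter Asymptotics Real

theorem pow_mul_stirling_pow_div_stirling_eq {p m : ℕ} (hp : 0 < p) (hm : 0 < m) :
    (p : ℝ) ^ (p * m) * (√(2 * m * π) * (m / exp 1) ^ m) ^ p /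
        (√(2 * (p * m : ℕ) * π) * ((p * m : ℕ) / exp 1) ^ (p * m)) =
      (2 * π) ^ (((p : ℝ) - 1) / 2) / (p : ℝ) ^ ((p : ℝ) / 2) *
        ((p * m : ℕ) : ℝ) ^ (((p : ℝ) - 1) / 2) := by
  set e : ℝ := ((p : ℝ) - 1) / 2
  have hP : (0 : ℝ) < p := by exact_mod_cast hp
  have hX : 0 < 2 * m * π := by positivity
  have hpow : (p : ℝ) ^ (p * m) * (m / exp 1) ^ (m * p) = ((p * m : ℕ) / exp 1) ^ (p * m) := by
    rw [mul_comm m p, ← mul_pow]; push_cast; ring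
  have hsqrt : √(2 * m * π) ^ p = (2 * m * π) ^ e * (2 * m * π) ^ (1 / 2 : ℝ) := by
    rw [sqrt_eq_rpow, ← rpow_mul_natCast hX.le, ← rpow_add hX]; congr 1; ring
  have hsqrt' :
      √(2 * (p * m : ℕ) * π) = (p : ℝ) ^ (1 / 2 : ℝ) * (2 * m * π) ^ (1 / 2 : ℝ) := by
    rw [sqrt_eq_rpow, ← mul_rpow hP.le hX.le]; push_cast; ring_nf
  have hp2 : (p : ℝ) ^ ((p : ℝ) / 2) = (p : ℝ) ^ e * (p : ℝ) ^ (1 / 2 : ℝ) := by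
    rw [← rpow_add hP]; congr 1; ring
  have hX' : (2 * m * π) ^ e = (2 * π) ^ e * (m : ℝ) ^ e := by
    rw [← mul_rpow (by positivity) (Nat.cast_nonneg m)]; ring_nf
  rw [mul_pow, ← pow_mul, ← hpow, hsqrt, hsqrt', hp2, hX', Nat.cast_mul,
    mul_rpow hP.le (Nat.cast_nonneg m)]
  have : (0 : ℝ) < (m / exp 1) ^ (m * p) := by positivity
  field_simp

theorem isEquivalent_pow_mul_factorial_pow_div_factorial {p : ℕ} (hp : 0 < p) :
    (fun m : ℕ => (p : ℝ) ^ (p * m) * (m ! : ℝ) ^ p / ((p * m)! : ℝ)) ~[atTop]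
      fun m => (2 * π) ^ (((p : ℝ) - 1) / 2) / (p : ℝ) ^ ((p : ℝ) / 2) *
        ((p * m : ℕ) : ℝ) ^ (((p : ℝ) - 1) / 2) := by
  have hstirling := Stirling.factorial_isEquivalent_stirling
  have hpm : Tendsto (fun m : ℕ => p * m) atTop atTop :=
    tendsto_id.const_mul_atTop' hp
  refine ((IsEquivalent.refl.mul (hstirling.pow p)).div
    (hstirling.comp_tendsto hpm)).trans_eventuallyEq ?_
  filter_upwards [eventually_gt_atTop 0] with m hm
  exact pow_mul_stirling_pow_div_stirling_eq hp hm

theorem eventually_le_balancingNumber {p : ℕ} (hp : p.Prime) {ε : ℝ} (hε : 0 < ε) :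
    ∃ N : ℕ, ∀ n : ℕ, N ≤ n → p ∣ n →
      (1 - ε) * ((2 * π) ^ (((p : ℝ) - 1) / 2) / (p : ℝ) ^ ((p : ℝ) / 2)) *
        (n : ℝ) ^ (((p : ℝ) - 1) / 2) ≤ (balancingNumber n p : ℝ) := by
  set e : ℝ := ((p : ℝ) - 1) / 2
  set C := (2 * π) ^ e / (p : ℝ) ^ ((p : ℝ) / 2)
  have hC : 0 < C := div_pos (by positivity) (rpow_pos_of_pos (by exact_mod_cast hp.pos) _)
  have hpos : ∀ᶠ m : ℕ in atTop, 0 < C * ((p * m : ℕ) : ℝ) ^ e := by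
    filter_upwards [eventually_gt_atTop 0] with m hm
    have : 0 < p * m := Nat.mul_pos hp.pos hm
    positivity
  have hlim := (isEquivalent_iff_tendsto_one (hpos.mono fun _ h => h.ne')).1
    (isEquivalent_pow_mul_factorial_pow_div_factorial hp.pos)
  obtain ⟨M, hM⟩ := eventually_atTop.1
    ((hlim.eventually (lt_mem_nhds (by linarith : 1 - ε < 1))).and hpos)
  refine ⟨p * M, fun n hn ⟨m, hnm⟩ => ?_⟩
  subst hnm
  obtain ⟨hgt, hm⟩ := hM m (Nat.le_of_mul_le_mul_left hn hp.pos)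
  rw [Pi.div_apply, lt_div_iff₀ hm] at hgt
  have hK := pow_mul_factorial_pow_div_factorial_le_balancingNumber hp (dvd_mul_right p m)
  rw [Nat.mul_div_cancel_left m hp.pos] at hK
  rw [mul_assoc]
  exact hgt.le.trans hK

/-- **Lower bound for `K(n,p)`.** For every prime `p` and `n` divisible by `p`,
`K(n,p) ≥ pⁿ·((n/p)!)^p / n!`; consequently for fixed prime `p`, as `n → ∞`,
`K(n,p) ≥ (1+o(1))·((2π)^((p-1)/2)/p^(p/2))·n^((p-1)/2)`. -/
theorem balancingNumber_lower_bound :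
    (∀ p n : ℕ, p.Prime → 0 < n → p ∣ n →
      (p : ℝ) ^ n * ((n / p).factorial : ℝ) ^ p / (n.factorial : ℝ) ≤
        (balancingNumber n p : ℝ)) ∧
    (∀ p : ℕ, p.Prime → ∀ ε : ℝ, 0 < ε → ∃ N : ℕ, ∀ n : ℕ, N ≤ n → p ∣ n →
      (1 - ε) * ((2 * Real.pi) ^ (((p : ℝ) - 1) / 2) / (p : ℝ) ^ ((p : ℝ) / 2)) *
        (n : ℝ) ^ (((p : ℝ) - 1) / 2) ≤ (balancingNumber n p : ℝ)) :=
  ⟨fun _ _ hp _ hpn => pow_mul_factorial_pow_div_factorial_le_balancingNumber hp hpn,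
    fun _ hp _ hε => eventually_le_balancingNumber hp hε⟩
end

section
/- Let p be a prime and let P(x_1, x_2, ..., x_{4p}) be a polynomial over the field Z_p of p elements which vanishes at every {0,1}-vector of Hamming weight 2p, and suppose that there is a {0,1}-vector z of Hamming weight 3p with P(z) ≠ 0 in Z_p. Then the degree of P is at least p. -/
open Finset

section Aux

variable {α : Type*} [DecidableEq α]

/-- The number of `m`-subsets of `K` containing a fixed `J ⊆ K`. -/
lemma hegedus_count_supersets (K J : Finset α) (hJK : J ⊆ K) (m : ℕ) (hm : J.card ≤ m) :
    ((K.powersetCard m).filter (fun B => J ⊆ B)).card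
      = ((K \ J).powersetCard (m - J.card)).card := by
  apply Finset.card_bij' (fun B _ => B \ J) (fun C _ => C ∪ J)
  · intro B hB
    simp only [mem_filter, Finset.mem_powersetCard] at hB
    obtain ⟨⟨hBK, hBc⟩, hJB⟩ := hB
    rw [Finset.mem_powersetCard]
    constructor
    · exact Finset.sdiff_subset_sdiff hBK (le_refl J)
    · rw [Finset.card_sdiff_of_subset hJB, hBc]
  · intro C hC
    rw [Finset.mem_powersetCard] at hC
    obtain ⟨hCKJ, hCc⟩ := hC
    have hdisj : Disjoint C J :=
      Finset.disjoint_left.mpr (fun x hxC hxJ => (Finset.mem_sdiff.mp (hCKJ hxC)).2 hxJ)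
    simp only [mem_filter, Finset.mem_powersetCard]
    refine ⟨⟨?_, ?_⟩, Finset.subset_union_right⟩
    · exact Finset.union_subset ((hCKJ).trans (Finset.sdiff_subset)) hJK
    · rw [Finset.card_union_of_disjoint hdisj, hCc]
      omega
  · intro B hB
    simp only [mem_filter] at hB
    exact Finset.sdiff_union_of_subset hB.2
  · intro C hC
    rw [Finset.mem_powersetCard] at hC
    have hdisj : Disjoint C J := by
      refine Finset.disjoint_left.mpr ?_
      intro x hxC hxJ
      exact (Finset.mem_sdiff.mp (hC.1 hxC)).2 hxJ
    exact Finset.union_sdiff_cancel_right hdisj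

/-- `(p + r).choose r ≡ 1 [MOD p]` for `r < p`, by Lucas's theorem. -/
lemma hegedus_choose_one (p r : ℕ) (hp : p.Prime) (hr : r < p) :
    (((p + r).choose r : ℕ) : ZMod p) = 1 := by
  haveI := Fact.mk hp
  have h := Choose.choose_modEq_choose_mod_mul_choose_div_nat (p := p) (n := p + r) (k := r)
  have h1 : (p + r) % p = r := by
    rw [Nat.add_mod_left]
    exact Nat.mod_eq_of_lt hr
  have h2 : (p + r) / p = 1 := by
    rw [add_comm, Nat.add_div_right _ hp.pos, Nat.div_eq_of_lt hr]
  have h3 : r % p = r := Nat.mod_eq_of_lt hr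
  have h4 : r / p = 0 := Nat.div_eq_of_lt hr
  rw [h1, h2, h3, h4, Nat.choose_self, Nat.choose_zero_right, one_mul] at h
  have := (ZMod.natCast_eq_natCast_iff _ _ _).mpr h
  simpa using this

/-- Evaluation of a polynomial at the indicator vector of a finite set. -/
lemma hegedus_eval_indicator {σ : Type*} {R : Type*} [CommSemiring R] [DecidableEq σ]
    (S : Finset σ) (P : MvPolynomial σ R) :
    MvPolynomial.eval (fun i => if i ∈ S then (1 : R) else 0) P
      = ∑ d ∈ P.support, P.coeff d * (if d.support ⊆ S then 1 else 0) := by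
  rw [MvPolynomial.eval_eq]
  refine Finset.sum_congr rfl (fun d _ => ?_)
  congr 1
  by_cases h : d.support ⊆ S
  · rw [if_pos h]
    apply Finset.prod_eq_one
    intro i hi
    rw [if_pos (h hi), one_pow]
  · rw [if_neg h]
    obtain ⟨i, hi, hiS⟩ := Finset.not_subset.mp h
    apply Finset.prod_eq_zero hi
    rw [if_neg hiS]
    exact zero_pow (Finsupp.mem_support_iff.mp hi)

end Aux

/-- **Hegedűs' lemma.** Let `p` be a prime and `P` a polynomial in `4p` variables over `Z_p`
that vanishes at every `{0,1}`-vector of Hamming weight `2p`, while `P(z) ≠ 0` for some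
`{0,1}`-vector `z` of Hamming weight `3p`. Then `deg P ≥ p`. -/
theorem hegedus_lemma (p : ℕ) (hp : p.Prime) (P : MvPolynomial (Fin (4 * p)) (ZMod p))
    (hvanish : ∀ x : Fin (4 * p) → Bool,
      (Finset.univ.filter fun i => x i = true).card = 2 * p →
      MvPolynomial.eval (fun i => if x i then (1 : ZMod p) else 0) P = 0)
    (hnonzero : ∃ z : Fin (4 * p) → Bool,
      (Finset.univ.filter fun i => z i = true).card = 3 * p ∧
      MvPolynomial.eval (fun i => if z i then (1 : ZMod p) else 0) P ≠ 0) :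
    p ≤ P.totalDegree := by
  by_contra hdeg
  push_neg at hdeg
  obtain ⟨z, hz, hPz⟩ := hnonzero
  have hp2 : 2 ≤ p := hp.two_le
  -- the support of z
  set Z : Finset (Fin (4 * p)) := Finset.univ.filter (fun i => z i = true) with hZdef
  have hZcard : Z.card = 3 * p := hz
  -- choose K ⊆ Z of size 2p - 1
  obtain ⟨K, hKZ, hKcard⟩ : ∃ K ⊆ Z, K.card = 2 * p - 1 :=
    Finset.exists_subset_card_eq (by omega)
  -- evaluation at the indicator of z equals evaluation at indicator of Z
  have hzZ : (fun i => if z i then (1 : ZMod p) else 0)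
      = (fun i => if i ∈ Z then (1 : ZMod p) else 0) := by
    funext i
    by_cases h : z i
    · rw [if_pos h, if_pos (by simp [hZdef, h])]
    · rw [if_neg h, if_neg (by simp [hZdef, h])]
  rw [hzZ] at hPz
  -- the key sum
  have key : ∑ B ∈ K.powersetCard (p - 1),
      MvPolynomial.eval (fun i => if i ∈ (Z \ K) ∪ B then (1 : ZMod p) else 0) P
      = MvPolynomial.eval (fun i => if i ∈ Z then (1 : ZMod p) else 0) P := by
    simp only [hegedus_eval_indicator]
    rw [Finset.sum_comm]
    refine Finset.sum_congr rfl (fun d hd => ?_)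
    rw [← Finset.mul_sum]
    congr 1
    -- card bound on the support of d
    have hdcard : d.support.card < p := by
      have h1 : d.support.card ≤ d.sum (fun _ e => e) := by
        rw [Finsupp.sum]
        calc d.support.card = ∑ _i ∈ d.support, 1 := by rw [Finset.sum_const, smul_eq_mul, mul_one]
        _ ≤ ∑ i ∈ d.support, d i :=
            Finset.sum_le_sum (fun i hi => Nat.one_le_iff_ne_zero.mpr (Finsupp.mem_support_iff.mp hi))
      exact lt_of_le_of_lt (h1.trans (MvPolynomial.le_totalDegree hd)) hdeg
    by_cases hAZ : d.support ⊆ Z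
    · rw [if_pos hAZ]
      -- condition `d.support ⊆ (Z \ K) ∪ B` is equivalent to `d.support ∩ K ⊆ B`
      have hequiv : ∀ B ∈ K.powersetCard (p - 1),
          (d.support ⊆ (Z \ K) ∪ B ↔ d.support ∩ K ⊆ B) := by
        intro B hB
        rw [Finset.mem_powersetCard] at hB
        constructor
        · intro h x hx
          rw [Finset.mem_inter] at hx
          rcases Finset.mem_union.mp (h hx.1) with h' | h'
          · exact absurd hx.2 (Finset.mem_sdiff.mp h').2
          · exact h'
        · intro h x hx
          by_cases hxK : x ∈ K
          · exact Finset.mem_union_right _ (h (Finset.mem_inter.mpr ⟨hx, hxK⟩))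
          · exact Finset.mem_union_left _ (Finset.mem_sdiff.mpr ⟨hAZ hx, hxK⟩)
      have : ∑ B ∈ K.powersetCard (p - 1),
          (if d.support ⊆ (Z \ K) ∪ B then (1 : ZMod p) else 0)
          = ∑ B ∈ K.powersetCard (p - 1),
          (if d.support ∩ K ⊆ B then (1 : ZMod p) else 0) :=
        Finset.sum_congr rfl (fun B hB => by rw [if_congr (hequiv B hB) rfl rfl])
      rw [this, Finset.sum_boole]
      set J := d.support ∩ K with hJdef
      have hJK' : J ⊆ K := Finset.inter_subset_right
      have hJc : J.card < p :=
        lt_of_le_of_lt (Finset.card_le_card Finset.inter_subset_left) hdcard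
      rw [hegedus_count_supersets K J hJK' (p - 1) (by omega), Finset.card_powersetCard,
        Finset.card_sdiff_of_subset hJK', hKcard]
      have hrw : 2 * p - 1 - J.card = p + (p - 1 - J.card) := by omega
      rw [hrw]
      exact hegedus_choose_one p (p - 1 - J.card) hp (by omega)
    · rw [if_neg hAZ]
      refine Finset.sum_eq_zero (fun B hB => ?_)
      rw [Finset.mem_powersetCard] at hB
      rw [if_neg]
      intro hsub
      exact hAZ (hsub.trans (Finset.union_subset (Finset.sdiff_subset) (hB.1.trans hKZ)))
  -- each summand on the left vanishes
  have hzero : ∀ B ∈ K.powersetCard (p - 1),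
      MvPolynomial.eval (fun i => if i ∈ (Z \ K) ∪ B then (1 : ZMod p) else 0) P = 0 := by
    intro B hB
    rw [Finset.mem_powersetCard] at hB
    obtain ⟨hBK, hBc⟩ := hB
    set y : Finset (Fin (4 * p)) := (Z \ K) ∪ B with hydef
    have hdisj : Disjoint (Z \ K) B :=
      Finset.disjoint_left.mpr (fun x hx hxB => (Finset.mem_sdiff.mp hx).2 (hBK hxB))
    have hycard : y.card = 2 * p := by
      rw [hydef, Finset.card_union_of_disjoint hdisj, Finset.card_sdiff_of_subset hKZ, hZcard, hKcard, hBc]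
      omega
    have h1 : (Finset.univ.filter fun i => (decide (i ∈ y)) = true).card = 2 * p := by
      have : (Finset.univ.filter fun i => (decide (i ∈ y)) = true) = y := by
        ext i; simp
      rw [this, hycard]
    have h2 := hvanish (fun i => decide (i ∈ y)) h1
    have h3 : (fun i => if (decide (i ∈ y) : Bool) then (1 : ZMod p) else 0)
        = (fun i => if i ∈ y then (1 : ZMod p) else 0) := by
      funext i
      by_cases h : i ∈ y <;> simp [h]
    rw [h3] at h2
    exact h2
  rw [Finset.sum_congr rfl hzero, Finset.sum_const, smul_zero] at key
  exact hPz key.symm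
end

section
/- There exist absolute positive constants c and c' such that the following holds. Let B > 2 be an integer, let F be an arbitrary field, and let V be a linear code over F of length n, dimension k and minimum relative distance at least δ. If m ≥ c·(B^2·k/δ)·log(B/δ) and V_m is the projection of V onto a random multiset of m coordinates (each of the m coordinates chosen independently and uniformly from {1,...,n}, with repetitions), then with probability at least 1 - e^{-c'·δ·m/B^2} the dimension of V_m over F is k and the minimum distance of V_m is at least ((B-1)/(B+1))·δ·m. -/
/-
Let `gᵢ = coordFunctional V i ∈ V*` be the `i`-th coordinate functional, so that a codeword `v`
vanishes at `i` iff `gᵢ v = 0`. The distance assumption says exactly that a proper subspace of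
`V*` contains at most `(1 - δ) n` of the `gᵢ`. If some nonzero codeword has weight
`< τ = (B-1)/(B+1)·δm` on the sample `ω`, then the sampled functionals at the more than `m - τ`
zero positions `J` lie in a proper subspace; choose `R ⊆ J` with `|R| ≤ k` whose functionals span
those of `J`. Since `F` may be infinite we union-bound over `R` rather than over codewords: for
fixed `R` and fixed `ω|R`, the more than `m - τ - k` other positions of `J` all land in the proper
subspace spanned by the functionals at `R`, a binomial tail with success probability `≤ 1 - δ`,
which the exponential moment bound controls by `e^{-λ(m - τ - k)} (1 + (1 - δ)(e^λ - 1))^m`.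
There are at most `(em/k)^k` sets `R`, and with `λ = 1/(B+1)` the resulting exponent is at most
`-δm/(16B²)` once `m ≥ 300 (B²k/δ) log(B/δ)`.
-/

open Finset Module Submodule Real

theorem exists_subset_card_le_finrank_span_image_eq (K : Type*) {M ι : Type*} [Field K]
    [AddCommGroup M] [Module K M] [FiniteDimensional K M] [DecidableEq ι] (v : ι → M)
    (J : Finset ι) :
    ∃ R ⊆ J, #R ≤ finrank K M ∧ span K (v '' R) = span K (v '' J) := by
  obtain ⟨f, hfJ, hspan, -⟩ := exists_fun_fin_finrank_span_eq K (v '' J)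
  choose j hjJ hjv using hfJ
  have hRJ : univ.image j ⊆ J := fun r hr => by
    obtain ⟨i, -, rfl⟩ := mem_image.mp hr
    exact hjJ i
  refine ⟨univ.image j, hRJ, card_image_le.trans ((card_fin _).trans_le (finrank_le _)),
    le_antisymm (span_mono (Set.image_mono (coe_subset.mpr hRJ)))
      (hspan.ge.trans (span_le.mpr ?_))⟩
  rintro _ ⟨i, rfl⟩
  exact subset_span ⟨j i, by simp, hjv i⟩

def sampleSpan (K : Type*) {M ι α : Type*} [Semiring K] [AddCommMonoid M] [Module K M]
    (g : α → M) (ω : ι → α) (R : Finset ι) : Submodule K M :=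
  span K (Set.range fun r : R => g (ω r))

open Classical in
theorem exists_card_le_finrank_sampleSpan_ne_top_lt_card_mem {K M ι α : Type*} [Field K]
    [AddCommGroup M] [Module K M] [FiniteDimensional K M] [Fintype ι] [DecidableEq ι]
    (g : α → M) {ω : ι → α} {U : Submodule K M} (hU : U ≠ ⊤) {a : ℝ}
    (hU_card : a + finrank K M < #{j | g (ω j) ∈ U}) :
    ∃ R : Finset ι, #R ≤ finrank K M ∧ sampleSpan K g ω R ≠ ⊤ ∧
      a < #{j : {j // j ∉ R} | g (ω j) ∈ sampleSpan K g ω R} := by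
  set J : Finset ι := {j | g (ω j) ∈ U}
  obtain ⟨R, -, hRcard, hspan⟩ := exists_subset_card_le_finrank_span_image_eq K (g ∘ ω) J
  have hS : sampleSpan K g ω R = span K ((g ∘ ω) '' J) := by
    rw [← hspan, Set.image_eq_range]
    rfl
  have hSU : sampleSpan K g ω R ≤ U := hS ▸ span_le.mpr fun _ ⟨j, hj, hjU⟩ =>
    hjU ▸ (mem_filter.mp hj).2
  have hJR : #J ≤ #{j : {j // j ∉ R} | g (ω j) ∈ sampleSpan K g ω R} + #R := by
    refine card_le_card_sdiff_add_card.trans (Nat.add_le_add_right ?_ _)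
    refine card_le_card_of_surjOn Subtype.val fun j hj => ?_
    obtain ⟨hjJ, hjR⟩ := mem_sdiff.mp hj
    have hjS : g (ω j) ∈ sampleSpan K g ω R := hS ▸ subset_span ⟨j, hjJ, rfl⟩
    exact ⟨⟨j, hjR⟩, by simpa using hjS, rfl⟩
  have : (#J : ℝ) ≤ #{j : {j // j ∉ R} | g (ω j) ∈ sampleSpan K g ω R} + finrank K M := by
    exact_mod_cast hJR.trans (Nat.add_le_add_left hRcard _)
  exact ⟨R, hRcard, ne_top_of_le_ne_top hU hSU, by linarith⟩

theorem exists_ne_zero_forall_mem_dual_apply_eq_zero {K W : Type*} [Field K] [AddCommGroup W]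
    [Module K W] [FiniteDimensional K W] {U : Submodule K (Dual K W)} (hU : U ≠ ⊤) :
    ∃ w : W, w ≠ 0 ∧ ∀ φ ∈ U, φ w = 0 := by
  obtain ⟨f, hf, hUf⟩ := U.exists_le_ker_of_lt_top (lt_top_iff_ne_top.mpr hU)
  refine ⟨(evalEquiv K W).symm f, by simpa using hf, fun φ hφ => ?_⟩
  simpa using hUf hφ

theorem card_filter_eq_zero_add_hammingNorm {α β : Type*} [Fintype α] [Zero β] [DecidableEq β]
    (x : α → β) : #{i | x i = 0} + hammingNorm x = Fintype.card α :=
  card_filter_add_card_filter_not _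

theorem ncard_setOf_ne_zero_eq_hammingNorm {ι β : Type*} [Fintype ι] [Zero β] [DecidableEq β]
    (w : ι → β) : ({j | w j ≠ 0} : Set ι).ncard = hammingNorm w := by
  rw [hammingNorm, ← Set.ncard_coe_finset, coe_filter]
  simp

theorem le_one_of_le_hammingNorm {α β : Type*} [Fintype α] [Zero β] [DecidableEq β] {x : α → β}
    (hx : x ≠ 0) {δ : ℝ} (h : δ * Fintype.card α ≤ hammingNorm x) : δ ≤ 1 := by
  have hpos : (0 : ℝ) < hammingNorm x := by exact_mod_cast hammingNorm_pos_iff.mpr hx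
  have hle : (hammingNorm x : ℝ) ≤ Fintype.card α := by exact_mod_cast hammingNorm_le_card_fintype
  by_contra! hδ
  nlinarith

theorem card_finset_card_le_mul_div_pow_le {ι : Type*} [Fintype ι] {k : ℕ}
    (hk : k ≤ Fintype.card ι) :
    (#{R : Finset ι | #R ≤ k} : ℝ) * (k / Fintype.card ι) ^ k ≤ exp k := by
  set N := Fintype.card ι
  set s : ℝ := k / N
  have hs0 : 0 ≤ s := by positivity
  have hs1 : s ≤ 1 := div_le_one_of_le₀ (by exact_mod_cast hk) (Nat.cast_nonneg _)
  have hNs : N * s = k := by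
    rcases Nat.eq_zero_or_pos N with hN | hN
    · simp [s, hN, Nat.le_zero.mp (hN ▸ hk)]
    · exact mul_div_cancel₀ _ (by positivity)
  calc (#{R : Finset ι | #R ≤ k} : ℝ) * s ^ k = ∑ R : Finset ι with #R ≤ k, s ^ k := by
        rw [sum_const, nsmul_eq_mul]
    _ ≤ ∑ R : Finset ι with #R ≤ k, s ^ #R :=
        sum_le_sum fun R hR => pow_le_pow_of_le_one hs0 hs1 (mem_filter.mp hR).2
    _ ≤ ∑ R : Finset ι, s ^ #R :=
        sum_le_sum_of_subset_of_nonneg (filter_subset _ _) fun _ _ _ => by positivity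
    _ = (s + 1) ^ N := by
        simpa [powerset_univ] using sum_pow_mul_eq_add_pow s 1 (univ : Finset ι)
    _ ≤ exp s ^ N := pow_le_pow_left₀ (by positivity) (by linarith [add_one_le_exp s]) N
    _ = exp k := by rw [← exp_nat_mul, hNs]

section Sampling

variable {ι α : Type*} [Fintype ι] [DecidableEq ι] [Fintype α]

theorem card_lt_card_filter_mem_le [DecidableEq α] (s : Finset α) {q t : ℝ} (hs : #s ≤ q)
    (ht : 0 ≤ t) (a : ℝ) :
    #{σ : ι → α | a < #{j | σ j ∈ s}} ≤
      exp (-(t * a)) * (Fintype.card α + q * (exp t - 1)) ^ Fintype.card ι := by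
  have hexp (σ : ι → α) :
      exp (t * #{j | σ j ∈ s}) = ∏ j, (if σ j ∈ s then exp t else 1) := by
    rw [card_filter, Nat.cast_sum, mul_sum, exp_sum]
    exact prod_congr rfl fun j _ => by split_ifs <;> simp
  have hsum : ∑ i : α, (if i ∈ s then exp t else 1) = Fintype.card α + #s * (exp t - 1) := by
    rw [sum_ite, sum_const, sum_const, filter_mem_eq_inter, univ_inter, filter_not,
      filter_mem_eq_inter, univ_inter, ← compl_eq_univ_sdiff, card_compl, nsmul_eq_mul,
      nsmul_eq_mul, mul_one, Nat.cast_sub (card_le_univ s)]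
    ring
  rw [exp_neg, inv_mul_eq_div, le_div_iff₀ (exp_pos _)]
  calc (#{σ : ι → α | a < #{j | σ j ∈ s}} : ℝ) * exp (t * a)
      = ∑ σ : ι → α with a < #{j | σ j ∈ s}, exp (t * a) := by
        rw [sum_const, nsmul_eq_mul]
    _ ≤ ∑ σ : ι → α with a < #{j | σ j ∈ s}, exp (t * #{j | σ j ∈ s}) :=
        sum_le_sum fun σ hσ => exp_le_exp.mpr (mul_le_mul_of_nonneg_left (mem_filter.mp hσ).2.le ht)
    _ ≤ ∑ σ : ι → α, exp (t * #{j | σ j ∈ s}) :=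
        sum_le_sum_of_subset_of_nonneg (filter_subset _ _) fun _ _ _ => (exp_pos _).le
    _ = (Fintype.card α + #s * (exp t - 1)) ^ Fintype.card ι := by
        simp only [hexp]
        rw [← Fintype.prod_sum (fun (_ : ι) (i : α) => if i ∈ s then exp t else 1), hsum,
          prod_const, card_univ]
    _ ≤ (Fintype.card α + q * (exp t - 1)) ^ Fintype.card ι := by
        have := one_le_exp ht
        gcongr

theorem card_filter_restrict_le (R : Finset ι)
    (Q : (R → α) → ({j // j ∉ R} → α) → Prop) [∀ ρ σ, Decidable (Q ρ σ)] {C : ℝ}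
    (hC : ∀ ρ, (#{σ | Q ρ σ} : ℝ) ≤ C) :
    #{ω : ι → α | Q (fun r => ω r) (fun j => ω j)} ≤ (Fintype.card α : ℝ) ^ #R * C := by
  let e := Equiv.piEquivPiSubtypeProd (· ∈ R) (fun _ => α)
  calc (#{ω : ι → α | Q (fun r => ω r) (fun j => ω j)} : ℝ)
      = #{p : (R → α) × ({j // j ∉ R} → α) | Q p.1 p.2} := by
        rw [card_equiv e (t := {p | Q p.1 p.2}) (by simp [e])]
    _ = ∑ ρ, (#{σ | Q ρ σ} : ℝ) := by
        simp only [card_filter, Nat.cast_sum, Fintype.sum_prod_type]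
    _ ≤ ∑ _ρ : R → α, C := sum_le_sum fun ρ _ => hC ρ
    _ = (Fintype.card α : ℝ) ^ #R * C := by simp

variable {K M : Type*} [Field K] [AddCommGroup M] [Module K M]

open Classical in
theorem card_sampleSpan_ne_top_lt_card_mem_le (g : α → M) {q t : ℝ} (hq0 : 0 ≤ q)
    (hq : ∀ U : Submodule K M, U ≠ ⊤ → (#{i | g i ∈ U} : ℝ) ≤ q) (ht : 0 ≤ t) (a : ℝ)
    (R : Finset ι) :
    #{ω : ι → α | sampleSpan K g ω R ≠ ⊤ ∧
        a < #{j : {j // j ∉ R} | g (ω j) ∈ sampleSpan K g ω R}} ≤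
      exp (-(t * a)) * (Fintype.card α + q * (exp t - 1)) ^ Fintype.card ι := by
  set W := (Fintype.card α : ℝ) + q * (exp t - 1)
  have hW : (Fintype.card α : ℝ) ≤ W :=
    le_add_of_nonneg_right (mul_nonneg hq0 (by linarith [one_le_exp ht]))
  have hC0 : 0 ≤ exp (-(t * a)) * W ^ Fintype.card {j // j ∉ R} := by
    have := (Nat.cast_nonneg _).trans hW
    positivity
  have hcard : #R + Fintype.card {j // j ∉ R} = Fintype.card ι := by
    rw [Fintype.card_subtype_compl, Fintype.card_coe]
    exact Nat.add_sub_cancel' (card_le_univ R)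
  refine (card_filter_restrict_le R (fun ρ σ => span K (Set.range (g ∘ ρ)) ≠ ⊤ ∧
      a < #{j | g (σ j) ∈ span K (Set.range (g ∘ ρ))})
      (C := exp (-(t * a)) * W ^ Fintype.card {j // j ∉ R}) fun ρ => ?_).trans ?_
  · by_cases hρ : span K (Set.range (g ∘ ρ)) = ⊤
    · simp only [hρ, ne_eq, not_true_eq_false, false_and, filter_false, card_empty,
        Nat.cast_zero]
      exact hC0
    · simpa only [hρ, ne_eq, not_false_eq_true, true_and, mem_filter, mem_univ] using
        card_lt_card_filter_mem_le {i | g i ∈ span K (Set.range (g ∘ ρ))} (hq _ hρ) ht a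
  · calc (Fintype.card α : ℝ) ^ #R * (exp (-(t * a)) * W ^ Fintype.card {j // j ∉ R})
        ≤ W ^ #R * (exp (-(t * a)) * W ^ Fintype.card {j // j ∉ R}) :=
          mul_le_mul_of_nonneg_right (pow_le_pow_left₀ (Nat.cast_nonneg _) hW _) hC0
      _ = exp (-(t * a)) * W ^ Fintype.card ι := by rw [mul_left_comm, ← pow_add, hcard]

open Classical in
theorem card_exists_ne_top_lt_card_mem_le [FiniteDimensional K M] (g : α → M) {q t : ℝ}
    (hq0 : 0 ≤ q) (hq : ∀ U : Submodule K M, U ≠ ⊤ → (#{i | g i ∈ U} : ℝ) ≤ q) (ht : 0 ≤ t)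
    (a : ℝ) :
    #{ω : ι → α | ∃ U : Submodule K M, U ≠ ⊤ ∧ a + finrank K M < #{j | g (ω j) ∈ U}} ≤
      #{R : Finset ι | #R ≤ finrank K M} *
        (exp (-(t * a)) * (Fintype.card α + q * (exp t - 1)) ^ Fintype.card ι) := by
  have hcover : ({ω | ∃ U : Submodule K M, U ≠ ⊤ ∧ a + finrank K M < #{j | g (ω j) ∈ U}} :
      Finset (ι → α)) ⊆ ({R | #R ≤ finrank K M} : Finset (Finset ι)).biUnion fun R =>
        {ω | sampleSpan K g ω R ≠ ⊤ ∧ a < #{j : {j // j ∉ R} | g (ω j) ∈ sampleSpan K g ω R}} := by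
    intro ω hω
    obtain ⟨U, hU, hU_card⟩ := (mem_filter.mp hω).2
    obtain ⟨R, hRcard, hR⟩ := exists_card_le_finrank_sampleSpan_ne_top_lt_card_mem g hU hU_card
    exact mem_biUnion.mpr ⟨R, mem_filter.mpr ⟨mem_univ _, hRcard⟩, mem_filter.mpr ⟨mem_univ _, hR⟩⟩
  calc (#{ω : ι → α | ∃ U : Submodule K M, U ≠ ⊤ ∧
        a + finrank K M < #{j | g (ω j) ∈ U}} : ℝ)
      ≤ ∑ R ∈ {R : Finset ι | #R ≤ finrank K M}, (#{ω : ι → α | sampleSpan K g ω R ≠ ⊤ ∧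
          a < #{j : {j // j ∉ R} | g (ω j) ∈ sampleSpan K g ω R}} : ℝ) := by
        exact_mod_cast (card_le_card hcover).trans card_biUnion_le
    _ ≤ ∑ _R ∈ {R : Finset ι | #R ≤ finrank K M},
          exp (-(t * a)) * (Fintype.card α + q * (exp t - 1)) ^ Fintype.card ι :=
        sum_le_sum fun R _ => card_sampleSpan_ne_top_lt_card_mem_le g hq0 hq ht a R
    _ = _ := by rw [sum_const, nsmul_eq_mul]

end Sampling

section Code

variable {F ι α : Type*} [Field F] (V : Submodule F (α → F))

def coordFunctional (i : α) : Dual F V := (LinearMap.proj i).comp V.subtype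

@[simp]
theorem coordFunctional_apply (i : α) (v : V) : coordFunctional V i v = (v : α → F) i := rfl

/-- The paper's `V_m` is `V.map (funLeft F F ω)`, where `ω` lists the sampled coordinates. -/
def IsGoodProjection [Fintype ι] (τ : ℝ) (ω : ι → α) : Prop :=
  finrank F (V.map (LinearMap.funLeft F F ω)) = finrank F V ∧
    ∀ w ∈ V.map (LinearMap.funLeft F F ω), w ≠ 0 → τ ≤ ({j | w j ≠ 0} : Set ι).ncard

variable {V} [DecidableEq F] [Fintype ι]

theorem isGoodProjection_of_le_hammingNorm {ω : ι → α} {τ : ℝ} (hτ : 0 < τ)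
    (h : ∀ v ∈ V, v ≠ 0 → τ ≤ hammingNorm (v ∘ ω)) : IsGoodProjection V τ ω := by
  refine ⟨?_, ?_⟩
  · have hinj : Function.Injective ((LinearMap.funLeft F F ω).domRestrict V) := by
      refine (injective_iff_map_eq_zero _).mpr fun v hv => by_contra fun hv0 => ?_
      have hzero : (v : α → F) ∘ ω = 0 := hv
      have := h v v.2 (by simpa using hv0)
      simp only [hzero, hammingNorm_zero, Nat.cast_zero] at this
      linarith
    rw [← LinearMap.range_domRestrict, LinearMap.finrank_range_of_inj hinj]
  · rintro _ ⟨v, hv, rfl⟩ hw0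
    rw [ncard_setOf_ne_zero_eq_hammingNorm]
    exact h v hv (by rintro rfl; exact hw0 (map_zero _))

variable [Fintype α]

open Classical in
theorem card_pow_sub_card_le_ncard_isGoodProjection [DecidableEq ι] {τ : ℝ} (hτ : 0 < τ) :
    (Fintype.card α : ℝ) ^ Fintype.card ι -
        #{ω : ι → α | ∃ v ∈ V, v ≠ 0 ∧ hammingNorm (v ∘ ω) < τ} ≤
      ({ω | IsGoodProjection V τ ω} : Set (ι → α)).ncard := by
  have hgood : (({ω | ¬∃ v ∈ V, v ≠ 0 ∧ hammingNorm (v ∘ ω) < τ} : Finset (ι → α)) :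
      Set (ι → α)) ⊆ {ω | IsGoodProjection V τ ω} := fun ω hω =>
    isGoodProjection_of_le_hammingNorm hτ (by simpa using hω)
  rw [sub_le_iff_le_add', ← Nat.cast_pow, ← Fintype.card_fun, ← card_univ,
    ← card_filter_add_card_filter_not (s := univ)
      (fun ω => ∃ v ∈ V, v ≠ 0 ∧ hammingNorm (v ∘ ω) < τ)]
  have := Set.ncard_le_ncard hgood (Set.toFinite _)
  rw [Set.ncard_coe_finset] at this
  exact_mod_cast Nat.add_le_add_left this _

open Classical in
theorem card_coordFunctional_mem_le {δ : ℝ}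
    (hdist : ∀ v ∈ V, v ≠ 0 → δ * Fintype.card α ≤ hammingNorm v) {U : Submodule F (Dual F V)}
    (hU : U ≠ ⊤) : (#{i | coordFunctional V i ∈ U} : ℝ) ≤ Fintype.card α - δ * Fintype.card α := by
  obtain ⟨w, hw0, hwU⟩ := exists_ne_zero_forall_mem_dual_apply_eq_zero hU
  calc (#{i | coordFunctional V i ∈ U} : ℝ) ≤ #{i | (w : α → F) i = 0} := by
        exact_mod_cast card_le_card fun i hi => by
          simp only [mem_filter] at hi ⊢
          exact ⟨hi.1, hwU _ hi.2⟩
    _ ≤ Fintype.card α - δ * Fintype.card α := by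
        have hsplit : (#{i | (w : α → F) i = 0} : ℝ) + hammingNorm (w : α → F) =
            Fintype.card α := by exact_mod_cast card_filter_eq_zero_add_hammingNorm _
        linarith [hdist w w.2 (by simpa using hw0)]

open Classical in
theorem exists_ne_top_lt_card_coordFunctional_mem {ω : ι → α} {v : α → F} (hv : v ∈ V)
    (hv0 : v ≠ 0) {τ : ℝ} (hτ : hammingNorm (v ∘ ω) < τ) :
    ∃ U : Submodule F (Dual F V), U ≠ ⊤ ∧
      Fintype.card ι - τ < #{j | coordFunctional V (ω j) ∈ U} := by
  obtain ⟨φ, hφ⟩ := Projective.exists_dual_ne_zero F (x := (⟨v, hv⟩ : V)) (by simpa using hv0)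
  refine ⟨LinearMap.ker (Dual.eval F V ⟨v, hv⟩), fun htop => hφ ?_, ?_⟩
  · exact LinearMap.mem_ker.mp (htop ▸ mem_top : φ ∈ LinearMap.ker (Dual.eval F V ⟨v, hv⟩))
  · have : (#{j | coordFunctional V (ω j) ∈ LinearMap.ker (Dual.eval F V ⟨v, hv⟩)} : ℝ) =
        #{j | (v ∘ ω) j = 0} := by simp
    have hsplit : (#{j | (v ∘ ω) j = 0} : ℝ) + hammingNorm (v ∘ ω) = Fintype.card ι := by
      exact_mod_cast card_filter_eq_zero_add_hammingNorm _
    linarith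

open Classical in
theorem card_exists_hammingNorm_comp_lt_le [DecidableEq ι] {δ : ℝ} (hδ1 : δ ≤ 1)
    (hdist : ∀ v ∈ V, v ≠ 0 → δ * Fintype.card α ≤ hammingNorm v) {t : ℝ} (ht : 0 ≤ t)
    (τ : ℝ) :
    #{ω : ι → α | ∃ v ∈ V, v ≠ 0 ∧ hammingNorm (v ∘ ω) < τ} ≤
      #{R : Finset ι | #R ≤ finrank F V} * (exp (-(t * (Fintype.card ι - τ - finrank F V))) *
        (Fintype.card α + (Fintype.card α - δ * Fintype.card α) * (exp t - 1)) ^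
          Fintype.card ι) := by
  have hsub : ({ω | ∃ v ∈ V, v ≠ 0 ∧ hammingNorm (v ∘ ω) < τ} : Finset (ι → α)) ⊆
      ({ω | ∃ U : Submodule F (Dual F V), U ≠ ⊤ ∧ (Fintype.card ι - τ - finrank F V) +
        finrank F V < #{j | coordFunctional V (ω j) ∈ U}} : Finset (ι → α)) := fun ω hω => by
    obtain ⟨v, hv, hv0, hτ⟩ := (mem_filter.mp hω).2
    simpa using exists_ne_top_lt_card_coordFunctional_mem hv hv0 hτ
  have hq0 : 0 ≤ (Fintype.card α : ℝ) - δ * Fintype.card α :=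
    sub_nonneg.mpr (mul_le_of_le_one_left (Nat.cast_nonneg _) hδ1)
  have hbound := card_exists_ne_top_lt_card_mem_le (ι := ι) (coordFunctional V) hq0
    (fun U hU => card_coordFunctional_mem_le hdist hU) ht (Fintype.card ι - τ - finrank F V)
  rw [Subspace.dual_finrank_eq] at hbound
  exact (Nat.cast_le.mpr (card_le_card hsub)).trans hbound

end Code

theorem one_add_mul_exp_sub_one_le {t δ : ℝ} (ht : 0 ≤ t) (hδ : 0 ≤ δ) :
    1 + (1 - δ) * (exp t - 1) ≤ exp (t - δ * (t / (1 + t))) := by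
  have hinv : exp (-t) ≤ 1 - t / (1 + t) := by
    rw [exp_neg, one_sub_div (by positivity), add_sub_cancel_right, ← one_div]
    exact one_div_le_one_div_of_le (by positivity) (by linarith [add_one_le_exp t])
  calc 1 + (1 - δ) * (exp t - 1) = exp t * (1 - δ * (1 - exp (-t))) := by
        rw [exp_neg]; field_simp; ring
    _ ≤ exp t * exp (-(δ * (t / (1 + t)))) := by
        gcongr
        nlinarith [add_one_le_exp (-(δ * (t / (1 + t))))]
    _ = exp (t - δ * (t / (1 + t))) := by rw [← exp_add, sub_eq_add_neg]

theorem two_add_log_add_two_mul_le {u L : ℝ} (hL : 1 ≤ L) (hu : 300 * L ≤ u) :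
    2 + log u + 2 * L ≤ 3 / 16 * u := by
  have hu0 : 0 < u := by linarith
  have hlog : log u ≤ 2 * √u - 2 := by
    have := log_le_sub_one_of_pos (sqrt_pos.mpr hu0)
    rw [log_sqrt hu0.le] at this
    linarith
  have hsqrt : 17 * √u ≤ u := by
    have h17 : 17 ≤ √u := le_sqrt_of_sq_le (by nlinarith)
    nlinarith [sq_sqrt hu0.le]
  linarith

theorem sub_one_div_add_one_sq_sub_one_div_add_two_le {B : ℝ} (hB : 3 ≤ B) :
    (B - 1) / (B + 1) ^ 2 - 1 / (B + 2) ≤ -(1 / (4 * B ^ 2)) := by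
  rw [div_sub_div _ _ (by positivity) (by positivity), neg_div',
    div_le_div_iff₀ (by positivity) (by positivity)]
  nlinarith [mul_nonneg (by linarith : (0 : ℝ) ≤ B - 3) (sq_nonneg B)]

theorem one_le_log_div {B δ : ℝ} (hB : 3 ≤ B) (hδ0 : 0 < δ) (hδ1 : δ ≤ 1) :
    1 ≤ log (B / δ) := by
  rw [le_log_iff_exp_le (by positivity)]
  have : B ≤ B / δ := le_div_self (by linarith) hδ0 hδ1
  linarith [exp_one_lt_d9]

theorem le_of_mul_div_mul_log_le {B k m δ : ℝ} (hB : 3 ≤ B) (hδ0 : 0 < δ) (hδ1 : δ ≤ 1)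
    (hk : 0 ≤ k) (hm : 300 * (B ^ 2 * k / δ) * log (B / δ) ≤ m) : k ≤ m := by
  have hL := one_le_log_div hB hδ0 hδ1
  have hA : 0 ≤ B ^ 2 * k / δ := by positivity
  have hB2 : 1 ≤ B ^ 2 := by nlinarith
  calc k ≤ B ^ 2 * k / δ := by
        rw [le_div_iff₀ hδ0]
        nlinarith [mul_le_mul_of_nonneg_left hδ1 hk, mul_le_mul_of_nonneg_right hB2 hk]
    _ ≤ 300 * (B ^ 2 * k / δ) * log (B / δ) := by nlinarith
    _ ≤ m := hm

theorem mul_two_add_log_div_le {B k m δ : ℝ} (hB : 3 ≤ B) (hδ0 : 0 < δ) (hδ1 : δ ≤ 1)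
    (hk : 0 < k) (hm : 300 * (B ^ 2 * k / δ) * log (B / δ) ≤ m) :
    k * (2 + log (m / k)) ≤ 3 / 16 * (δ * m / B ^ 2) := by
  set L := log (B / δ)
  set u := δ * m / (B ^ 2 * k) with hu_def
  have hL : 1 ≤ L := one_le_log_div hB hδ0 hδ1
  have hu : 300 * L ≤ u := by
    rw [le_div_iff₀ (by positivity)]
    calc 300 * L * (B ^ 2 * k) = 300 * (B ^ 2 * k / δ) * L * δ := by field_simp
      _ ≤ m * δ := by gcongr
      _ = δ * m := mul_comm _ _
  have hmk : m / k = u * (B ^ 2 / δ) := by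
    rw [hu_def]
    field_simp
  have hlog : log (m / k) ≤ log u + 2 * L := by
    have hu0 : 0 < u := by linarith
    rw [hmk, log_mul hu0.ne' (by positivity), ← log_rpow (by positivity)]
    gcongr
    rw [rpow_two, div_pow]
    gcongr
    nlinarith
  calc k * (2 + log (m / k)) ≤ k * (3 / 16 * u) := by
        gcongr
        linarith [two_add_log_add_two_mul_le hL hu]
    _ = 3 / 16 * (δ * m / B ^ 2) := by
        rw [hu_def]
        field_simp

theorem union_bound_exponent_le {B k m δ : ℝ} (hB : 3 ≤ B) (hδ0 : 0 < δ) (hδ1 : δ ≤ 1)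
    (hk : 0 < k) (hm : 300 * (B ^ 2 * k / δ) * log (B / δ) ≤ m) :
    k + k * log (m / k) - 1 / (B + 1) * (m - (B - 1) / (B + 1) * δ * m - k) +
      m * (1 / (B + 1) - δ * (1 / (B + 1) / (1 + 1 / (B + 1)))) ≤ -(1 / 16 * δ * m / B ^ 2) := by
  have hm0 : 0 ≤ m := hk.le.trans (le_of_mul_div_mul_log_le hB hδ0 hδ1 hk.le hm)
  have ht : 1 / (B + 1) / (1 + 1 / (B + 1)) = 1 / (B + 2) := by
    field_simp
    ring
  have hcoeff := mul_le_mul_of_nonneg_left (sub_one_div_add_one_sq_sub_one_div_add_two_le hB)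
    (mul_nonneg hδ0.le hm0)
  rw [sq, ← div_div] at hcoeff
  have hkB : 0 ≤ k * (1 - 1 / (B + 1)) :=
    mul_nonneg hk.le (sub_nonneg.mpr ((div_le_one (by linarith)).mpr (by linarith)))
  have hsq : δ * m * -(1 / (4 * B ^ 2)) = -(4 / 16) * (δ * m / B ^ 2) := by
    field_simp
    ring
  rw [ht]
  calc k + k * log (m / k) - 1 / (B + 1) * (m - (B - 1) / (B + 1) * δ * m - k) +
        m * (1 / (B + 1) - δ * (1 / (B + 2)))
      = k * (2 + log (m / k)) - k * (1 - 1 / (B + 1)) +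
          δ * m * ((B - 1) / (B + 1) / (B + 1) - 1 / (B + 2)) := by ring
    _ ≤ -(1 / 16 * (δ * m / B ^ 2)) := by
        linarith [mul_two_add_log_div_le hB hδ0 hδ1 hk hm]
    _ = -(1 / 16 * δ * m / B ^ 2) := by ring

theorem union_bound_le_exp_mul_pow {B δ n N : ℝ} {k m : ℕ} (hB : 3 ≤ B) (hδ0 : 0 < δ)
    (hδ1 : δ ≤ 1) (hk : 1 ≤ k) (hn : 0 ≤ n) (hm : 300 * (B ^ 2 * k / δ) * log (B / δ) ≤ m)
    (hN : N * (k / m) ^ k ≤ exp k) :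
    N * (exp (-(1 / (B + 1) * (m - (B - 1) / (B + 1) * δ * m - k))) *
      (n + (n - δ * n) * (exp (1 / (B + 1)) - 1)) ^ m) ≤
        exp (-(1 / 16 * δ * m / B ^ 2)) * n ^ m := by
  set t := 1 / (B + 1)
  have hk0 : (0 : ℝ) < k := by exact_mod_cast hk
  have hm0 : (0 : ℝ) < m := hk0.trans_le (le_of_mul_div_mul_log_le hB hδ0 hδ1 hk0.le hm)
  have hNle : N ≤ exp (k + k * log (m / k)) := by
    have hpow : exp (k * log (m / k)) * (k / m) ^ k = 1 := by
      rw [exp_nat_mul, exp_log (by positivity), ← mul_pow, div_mul_div_cancel₀ hk0.ne',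
        div_self hm0.ne', one_pow]
    calc N = N * (k / m) ^ k * exp (k * log (m / k)) := by
          rw [mul_assoc, mul_comm (_ ^ k), hpow, mul_one]
      _ ≤ exp k * exp (k * log (m / k)) := by gcongr
      _ = exp (k + k * log (m / k)) := (exp_add _ _).symm
  have ht0 : 0 ≤ t := by positivity
  have hWeq : n + (n - δ * n) * (exp t - 1) = n * (1 + (1 - δ) * (exp t - 1)) := by ring
  have hW0 : 0 ≤ n + (n - δ * n) * (exp t - 1) := hWeq ▸ mul_nonneg hn
    (add_nonneg zero_le_one (mul_nonneg (by linarith) (by linarith [one_le_exp ht0])))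
  have hW : n + (n - δ * n) * (exp t - 1) ≤ n * exp (t - δ * (t / (1 + t))) :=
    hWeq ▸ mul_le_mul_of_nonneg_left (one_add_mul_exp_sub_one_le ht0 hδ0.le) hn
  calc N * (exp (-(t * (m - (B - 1) / (B + 1) * δ * m - k))) *
        (n + (n - δ * n) * (exp t - 1)) ^ m)
      ≤ exp (k + k * log (m / k)) * (exp (-(t * (m - (B - 1) / (B + 1) * δ * m - k))) *
        (n * exp (t - δ * (t / (1 + t)))) ^ m) := by gcongr
    _ = exp (k + k * log (m / k) - t * (m - (B - 1) / (B + 1) * δ * m - k) +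
          m * (t - δ * (t / (1 + t)))) * n ^ m := by
        rw [mul_pow, ← exp_nat_mul]
        simp only [exp_add, exp_sub, exp_neg]
        ring
    _ ≤ exp (-(1 / 16 * δ * m / B ^ 2)) * n ^ m := by
        gcongr
        exact union_bound_exponent_le hB hδ0 hδ1 hk0 hm

theorem one_sub_exp_mul_le_ncard_isGoodProjection {F ι α : Type*} [Field F] [DecidableEq F]
    [Fintype ι] [DecidableEq ι] [Fintype α] {V : Submodule F (α → F)} (hV : V ≠ ⊥) {B δ : ℝ}
    (hB : 3 ≤ B) (hδ : 0 < δ) (hdist : ∀ v ∈ V, v ≠ 0 → δ * Fintype.card α ≤ hammingNorm v)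
    (hm : 300 * (B ^ 2 * finrank F V / δ) * log (B / δ) ≤ Fintype.card ι) :
    (1 - exp (-(1 / 16 * δ * Fintype.card ι / B ^ 2))) * (Fintype.card α : ℝ) ^ Fintype.card ι ≤
      ({ω | IsGoodProjection V ((B - 1) / (B + 1) * δ * Fintype.card ι) ω} :
        Set (ι → α)).ncard := by
  obtain ⟨v₀, hv₀, hv₀0⟩ := exists_mem_ne_zero_of_ne_bot hV
  have hδ1 := le_one_of_le_hammingNorm hv₀0 (hdist v₀ hv₀ hv₀0)
  have hk1 : 1 ≤ finrank F V := Nat.one_le_iff_ne_zero.mpr fun h => hV (finrank_eq_zero.mp h)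
  have hkm : finrank F V ≤ Fintype.card ι := by
    exact_mod_cast le_of_mul_div_mul_log_le hB hδ hδ1 (Nat.cast_nonneg _) hm
  have hτ : 0 < (B - 1) / (B + 1) * δ * Fintype.card ι := by
    have : (0 : ℝ) < Fintype.card ι := by exact_mod_cast hk1.trans hkm
    exact mul_pos (mul_pos (div_pos (by linarith) (by linarith)) hδ) this
  have hbad := card_exists_hammingNorm_comp_lt_le (ι := ι) hδ1 hdist (t := 1 / (B + 1))
    (by positivity) ((B - 1) / (B + 1) * δ * Fintype.card ι)
  have hsmall := card_finset_card_le_mul_div_pow_le (ι := ι) hkm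
  rw [sub_mul, one_mul]
  linarith [card_pow_sub_card_le_ncard_isGoodProjection (ι := ι) (V := V) hτ,
    union_bound_le_exp_mul_pow hB hδ hδ1 hk1 (Nat.cast_nonneg (Fintype.card α)) hm hsmall]

/-- **Random projections of linear codes.** There are absolute positive constants `c, c'` such
that the following holds. Let `B > 2` be an integer, `F` an arbitrary field and
`V ⊆ Fⁿ` a linear code of dimension `k` and minimum relative distance at least `δ`. If
`m ≥ c·(B²k/δ)·log(B/δ)`, then the proportion of multisets `ω` of `m` coordinates (i.e. maps
`Fin m → Fin n`, each coordinate uniform and independent) for which the projection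
`V_m = V.map (funLeft ω)` has dimension `k` and minimum distance at least `((B-1)/(B+1))·δ·m`
is at least `1 - e^{-c'·δ·m/B²}`. -/
theorem random_projection_of_code :
    ∃ c c' : ℝ, 0 < c ∧ 0 < c' ∧
      ∀ (F : Type*) [Field F], ∀ (n k m B : ℕ) (δ : ℝ) (V : Submodule F (Fin n → F)),
        2 < B → 0 < δ →
        Module.finrank F V = k →
        (∀ v ∈ V, v ≠ 0 → δ * n ≤ (({i | v i ≠ 0} : Set (Fin n)).ncard : ℝ)) →
        c * ((B : ℝ) ^ 2 * k / δ) * Real.log ((B : ℝ) / δ) ≤ (m : ℝ) →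
        (1 - Real.exp (-(c' * δ * m / (B : ℝ) ^ 2))) * (n : ℝ) ^ m ≤
          (({ω : Fin m → Fin n |
            Module.finrank F (V.map (LinearMap.funLeft F F ω)) = k ∧
            ∀ w ∈ V.map (LinearMap.funLeft F F ω), w ≠ 0 →
              ((B : ℝ) - 1) / ((B : ℝ) + 1) * δ * m ≤
                (({i | w i ≠ 0} : Set (Fin m)).ncard : ℝ)}).ncard : ℝ) := by
  refine ⟨300, 1 / 16, by norm_num, by norm_num, fun F _ n k m B δ V hB hδ hk hdist hm => ?_⟩
  classical
  subst hk
  rcases eq_or_ne V ⊥ with rfl | hV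
  · simp only [Submodule.finrank_eq_zero, Submodule.map_bot, finrank_bot, mem_bot, ne_eq,
      forall_eq, not_true_eq_false, IsEmpty.forall_iff, and_self, Set.ofPred_true,
      Set.ncard_univ, Nat.card_eq_fintype_card, Fintype.card_pi, Fintype.card_fin, prod_const,
      card_univ, Nat.cast_pow]
    exact mul_le_of_le_one_left (by positivity) (sub_le_self _ (exp_pos _).le)
  have h := one_sub_exp_mul_le_ncard_isGoodProjection (ι := Fin m) hV
    (by exact_mod_cast hB : (3 : ℝ) ≤ B) hδ
    (by simpa only [ncard_setOf_ne_zero_eq_hammingNorm, Fintype.card_fin] using hdist)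
    (by simpa only [Fintype.card_fin] using hm)
  simp only [Fintype.card_fin] at h
  exact h
end

section
/- Let F be an arbitrary field and let V ⊆ F^n be a linear subspace of dimension k over F. For each v ∈ V let C(v) ∈ {0,1}^n be the indicator vector of the support of v (C(v)_i = 1 if v_i ≠ 0 and C(v)_i = 0 if v_i = 0), and let 𝓒 = {C(v) : v ∈ V}. Then the VC-dimension of 𝓒 equals k. -/
/-- A family `𝓒` of subsets of coordinates (binary vectors of length `n`, encoded as sets)
shatters a set `I` of coordinates if every subset `J ⊆ I` is the trace on `I` of some member
of `𝓒`. -/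
def ShattersSet {n : ℕ} (𝓒 : Set (Set (Fin n))) (I : Finset (Fin n)) : Prop :=
  ∀ J : Finset (Fin n), J ⊆ I → ∃ S ∈ 𝓒, ∀ i ∈ I, (i ∈ S ↔ i ∈ J)

/-- **VC-dimension of the supports of a linear code.** Let `F` be an arbitrary field and
`V ⊆ Fⁿ` a linear subspace of dimension `k`. Then the family `𝓒` of indicator vectors
(supports) of the vectors of `V` has VC-dimension exactly `k`: every shattered set of
coordinates has size at most `k`, and some shattered set has size exactly `k`. -/
theorem vc_dimension_of_code_supports (F : Type*) [Field F] (n k : ℕ)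
    (V : Submodule F (Fin n → F)) (hk : Module.finrank F V = k) :
    (∀ I : Finset (Fin n),
        ShattersSet {S | ∃ v ∈ V, S = {i | v i ≠ 0}} I → I.card ≤ k) ∧
    (∃ I : Finset (Fin n),
        ShattersSet {S | ∃ v ∈ V, S = {i | v i ≠ 0}} I ∧ I.card = k) := by
  haveI : FiniteDimensional F V := inferInstance
  constructor
  · -- upper bound
    intro I hI
    have h : ∀ i : I, ∃ v : Fin n → F, v ∈ V ∧ ∀ j ∈ I, (v j ≠ 0 ↔ j = i.1) := by
      intro i
      obtain ⟨S, ⟨v, hvV, rfl⟩, hS⟩ := hI {i.1} (Finset.singleton_subset_iff.2 i.2)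
      refine ⟨v, hvV, fun j hj => ?_⟩
      simpa using hS j hj
    choose v hvV hvs using h
    have hli : LinearIndependent F (fun i : I => (⟨v i, hvV i⟩ : V)) := by
      rw [Fintype.linearIndependent_iff]
      intro g hg i
      have h0 : ∑ j : I, g j • v j = 0 := by
        have := congrArg (Subtype.val) hg
        push_cast at this
        simpa using this
      have h1 := congrFun h0 i.1
      simp only [Finset.sum_apply, Pi.smul_apply, smul_eq_mul, Pi.zero_apply] at h1
      rw [Finset.sum_eq_single i] at h1
      · have hne : v i i.1 ≠ 0 := (hvs i i.1 i.2).2 rfl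
        exact (mul_eq_zero.mp h1).resolve_right hne
      · intro j _ hji
        have : v j i.1 = 0 := by
          by_contra hc
          exact hji (Subtype.ext ((hvs j i.1 i.2).1 hc).symm)
        simp [this]
      · intro hc
        exact absurd (Finset.mem_univ i) hc
    have := hli.fintype_card_le_finrank
    simpa [hk] using this
  · -- lower bound
    classical
    set φ : Fin n → Module.Dual F V := fun i => (LinearMap.proj i).comp V.subtype with hφ
    -- span of coordinate projections on Fⁿ is everything
    have htopPi : Submodule.span F
        (Set.range (fun i : Fin n => (LinearMap.proj i : (Fin n → F) →ₗ[F] F))) = ⊤ := by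
      rw [eq_top_iff]
      rintro f -
      have hf : f = ∑ i : Fin n, f ((Pi.single i (1:F) : Fin n → F)) • (LinearMap.proj i : (Fin n → F) →ₗ[F] F) := by
        refine LinearMap.ext fun x => ?_
        rw [LinearMap.sum_apply]
        simp only [LinearMap.smul_apply, LinearMap.proj_apply, smul_eq_mul]
        have hxrep : x = ∑ i : Fin n, x i • (Pi.single i (1:F) : Fin n → F) := by
          ext j
          rw [Finset.sum_apply]
          simp [Pi.single_apply]
        calc f x = f (∑ i : Fin n, x i • (Pi.single i (1:F) : Fin n → F)) := by rw [← hxrep]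
          _ = ∑ i : Fin n, f ((Pi.single i (1:F) : Fin n → F)) * x i := by
              rw [map_sum]
              simp [mul_comm]
      rw [hf]
      exact Submodule.sum_mem _ fun i _ =>
        Submodule.smul_mem _ _ (Submodule.subset_span ⟨i, rfl⟩)
    have hspan : Submodule.span F (Set.range φ) = ⊤ := by
      have hrange : Set.range φ =
          V.subtype.dualMap '' Set.range (fun i : Fin n => (LinearMap.proj i : (Fin n → F) →ₗ[F] F)) := by
        ext g
        constructor
        · rintro ⟨i, rfl⟩; exact ⟨LinearMap.proj i, ⟨i, rfl⟩, rfl⟩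
        · rintro ⟨p, ⟨i, rfl⟩, rfl⟩; exact ⟨i, rfl⟩
      rw [hrange, ← Submodule.map_span, htopPi, Submodule.map_top,
        LinearMap.range_dualMap_eq_dualAnnihilator_ker, Submodule.ker_subtype,
        Submodule.dualAnnihilator_bot]
    obtain ⟨b, hbsub, hbspan, hbli⟩ := exists_linearIndependent F (Set.range φ)
    rw [hspan] at hbspan
    have hbfin : b.Finite := hbli.setFinite
    haveI := hbfin.fintype
    have hbcard : b.toFinset.card = k := by
      have h1 := finrank_span_set_eq_card hbli
      rw [hbspan, finrank_top, Subspace.dual_finrank_eq, hk] at h1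
      omega
    have hex : ∀ f : b, ∃ i : Fin n, φ i = (f : Module.Dual F V) := fun f => hbsub f.2
    choose ψ hψ using hex
    have hψinj : Function.Injective ψ := by
      intro f g hfg
      apply Subtype.ext
      rw [← hψ f, ← hψ g, hfg]
    set I : Finset (Fin n) := Finset.image ψ Finset.univ with hI
    have hIcard : I.card = k := by
      rw [hI, Finset.card_image_of_injective _ hψinj, Finset.card_univ, ← Set.toFinset_card,
        hbcard]
    set L : V →ₗ[F] (I → F) := LinearMap.pi (fun i : I => φ i.1) with hL
    have hLinj : Function.Injective L := by
      rw [← LinearMap.ker_eq_bot, Submodule.eq_bot_iff]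
      intro x hx
      replace hx : L x = 0 := hx
      have hb0 : b ⊆ SetLike.coe (LinearMap.ker (Module.Dual.eval F V x)) := by
        intro g hg
        have hmem : ψ ⟨g, hg⟩ ∈ I := Finset.mem_image_of_mem _ (Finset.mem_univ _)
        have := congrFun hx ⟨ψ ⟨g, hg⟩, hmem⟩
        simp only [hL, LinearMap.pi_apply, Pi.zero_apply] at this
        have h2 : φ (ψ ⟨g, hg⟩) = g := hψ ⟨g, hg⟩
        have hgx : g x = 0 := by rw [← h2]; exact this
        simpa [LinearMap.mem_ker] using hgx
      have : (⊤ : Submodule F (Module.Dual F V)) ≤ LinearMap.ker (Module.Dual.eval F V x) := by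
        rw [← hbspan]
        exact Submodule.span_le.mpr hb0
      have hall : ∀ g : Module.Dual F V, g x = 0 := fun g => this (Submodule.mem_top)
      exact (Module.forall_dual_apply_eq_zero_iff F x).mp hall
    have hfr : Module.finrank F V = Module.finrank F (I → F) := by
      rw [hk, Module.finrank_pi, Fintype.card_coe, hIcard]
    have hLsurj : Function.Surjective L :=
      (LinearMap.injective_iff_surjective_of_finrank_eq_finrank hfr).mp hLinj
    refine ⟨I, ?_, hIcard⟩
    intro J hJ
    obtain ⟨x, hx⟩ := hLsurj (fun i : I => if (i : Fin n) ∈ J then 1 else 0)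
    refine ⟨{i | (x : Fin n → F) i ≠ 0}, ⟨x, x.2, rfl⟩, ?_⟩
    intro i hi
    have hxi := congrFun hx ⟨i, hi⟩
    simp only [hL, LinearMap.pi_apply, hφ, LinearMap.comp_apply, LinearMap.proj_apply,
      Submodule.coe_subtype] at hxi
    simp only [Set.mem_setOf_eq, hxi]
    by_cases hij : i ∈ J <;> simp [hij]
end

section
/- Let G be a connected graph with n vertices and minimum degree at least k. Then γ_c(G) ≤ (n/(k+1))·(ln(k+1) + 4) - 2. -/
/-!
Choose `A` at random, each vertex independently with probability `p = ln(k+1)/(k+1)`, and let `B`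
be the set of vertices with no closed neighbour in `A`. Then `A ∪ B` is dominating and splits into
connected pieces: the components of `G[A]`, of which there are at most `∑_{v ∈ A} 1/|N[v] ∩ A|`,
and the singletons of `B`. Joining the two closest pieces along a shortest path connects them;
since `A ∪ B` dominates, the two closest pieces are at distance at most 3, so a join adds at most
two vertices, and it adds two only while the pieces are pairwise at distance at least 3, hence at
most `n/(k+1)` many. In expectation `|A| = pn`, `|B| ≤ n(1-p)^(k+1) ≤ n/(k+1)` and
`∑_{v ∈ A} 1/|N[v] ∩ A| ≤ n/(k+1)`.
-/

/-- `X` is a dominating set of `G`: every vertex outside `X` has a neighbor in `X`. -/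
def IsDominatingSet {V : Type*} (G : SimpleGraph V) (X : Set V) : Prop :=
  ∀ v ∉ X, ∃ u ∈ X, G.Adj u v

/-- The domination number `γ(G)`: the minimum size of a dominating set. -/
noncomputable def dominationNumber {V : Type*} (G : SimpleGraph V) : ℕ :=
  sInf {c | ∃ X : Set V, IsDominatingSet G X ∧ X.ncard = c}

/-- The connected domination number `γ_c(G)`: the minimum size of a dominating set inducing a
connected subgraph. -/
noncomputable def connectedDominationNumber {V : Type*} (G : SimpleGraph V) : ℕ :=
  sInf {c | ∃ X : Set V, IsDominatingSet G X ∧ (G.induce X).Connected ∧ X.ncard = c}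

open Finset SimpleGraph

lemma Finset.card_image_le_sum_one_div_card {ι κ : Type*} [DecidableEq κ] {f : ι → κ}
    {s : Finset ι} {t : ι → Finset ι} (hmem : ∀ i ∈ s, i ∈ t i)
    (hsub : ∀ i ∈ s, t i ⊆ {j ∈ s | f j = f i}) :
    (#(s.image f) : ℝ) ≤ ∑ i ∈ s, 1 / (#(t i) : ℝ) := by
  calc (#(s.image f) : ℝ)
      = ∑ c ∈ s.image f, ∑ i ∈ s with f i = c, 1 / (#{j ∈ s | f j = c} : ℝ) := by
        rw [card_eq_sum_ones, Nat.cast_sum]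
        refine sum_congr rfl fun c hc => ?_
        obtain ⟨i, hi, rfl⟩ := mem_image.mp hc
        have : (#{j ∈ s | f j = f i} : ℝ) ≠ 0 := by
          exact_mod_cast (card_pos.mpr ⟨i, by simp [hi]⟩).ne'
        rw [sum_const, nsmul_eq_mul, mul_one_div_cancel this, Nat.cast_one]
    _ = ∑ i ∈ s, 1 / (#{j ∈ s | f j = f i} : ℝ) := by
        rw [← sum_fiberwise_of_maps_to (g := f) (t := s.image f) fun i hi => mem_image_of_mem f hi]
        exact sum_congr rfl fun c _ => sum_congr rfl fun i hi => by rw [(mem_filter.mp hi).2]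
    _ ≤ ∑ i ∈ s, 1 / (#(t i) : ℝ) := by
        refine sum_le_sum fun i hi => one_div_le_one_div_of_le ?_ ?_
        · exact_mod_cast card_pos.mpr ⟨i, hmem i hi⟩
        · exact_mod_cast card_le_card (hsub i hi)

section

variable {V : Type*}

section RandomSubset

variable [Fintype V]

/-- The expectation of `f` at a random subset of `V` that contains each element independently with
probability `p`. -/
noncomputable def bernoulliMean (p : ℝ) (f : Finset V → ℝ) : ℝ :=
  ∑ s, p ^ #s * (1 - p) ^ (Fintype.card V - #s) * f s

variable {p : ℝ}

lemma bernoulliMean_add (f g : Finset V → ℝ) :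
    bernoulliMean p (fun s => f s + g s) = bernoulliMean p f + bernoulliMean p g := by
  simp only [bernoulliMean, mul_add, sum_add_distrib]

lemma bernoulliMean_const_mul (c : ℝ) (f : Finset V → ℝ) :
    bernoulliMean p (fun s => c * f s) = c * bernoulliMean p f := by
  simp only [bernoulliMean, mul_sum]
  exact sum_congr rfl fun s _ => by ring

lemma bernoulliMean_sum {ι : Type*} (t : Finset ι) (f : ι → Finset V → ℝ) :
    bernoulliMean p (fun s => ∑ i ∈ t, f i s) = ∑ i ∈ t, bernoulliMean p (f i) := by
  simp only [bernoulliMean, mul_sum]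
  exact sum_comm

lemma bernoulliMean_const (c : ℝ) : bernoulliMean (V := V) p (fun _ => c) = c := by
  rw [bernoulliMean, ← sum_mul, Fintype.sum_pow_mul_eq_add_pow, add_sub_cancel, one_pow, one_mul]

lemma bernoulliMean_mono (hp0 : 0 ≤ p) (hp1 : p ≤ 1) {f g : Finset V → ℝ} (h : ∀ s, f s ≤ g s) :
    bernoulliMean p f ≤ bernoulliMean p g :=
  sum_le_sum fun s _ => mul_le_mul_of_nonneg_left (h s) (by have := sub_nonneg.mpr hp1; positivity)

lemma bernoulliMean_comp_finsetCongr (σ : Equiv.Perm V) (f : Finset V → ℝ) :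
    bernoulliMean p (f ∘ σ.finsetCongr) = bernoulliMean p f := by
  simp only [bernoulliMean, Function.comp_apply]
  exact Fintype.sum_equiv σ.finsetCongr _ _ fun s => by simp

lemma bernoulliMean_ite_disjoint [DecidableEq V] (N : Finset V) :
    bernoulliMean p (fun s => if Disjoint N s then 1 else 0) = (1 - p) ^ #N := by
  have hcard : Fintype.card V = #N + #Nᶜ := by rw [card_add_card_compl]
  simp only [bernoulliMean, mul_ite, mul_one, mul_zero]
  rw [← sum_filter]
  have hfilter : ({s | Disjoint N s} : Finset (Finset V)) = Nᶜ.powerset := by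
    ext s; simp [subset_compl_iff_disjoint_left]
  rw [hfilter]
  calc ∑ s ∈ Nᶜ.powerset, p ^ #s * (1 - p) ^ (Fintype.card V - #s)
      = ∑ s ∈ Nᶜ.powerset, (1 - p) ^ #N * (p ^ #s * (1 - p) ^ (#Nᶜ - #s)) := by
        refine sum_congr rfl fun s hs => ?_
        rw [hcard, Nat.add_sub_assoc (card_le_card (mem_powerset.mp hs)), pow_add]
        ring
    _ = (1 - p) ^ #N := by rw [← mul_sum, sum_pow_mul_eq_add_pow, add_sub_cancel, one_pow, mul_one]

lemma exists_le_bernoulliMean (hp0 : 0 ≤ p) (hp1 : p ≤ 1) (f : Finset V → ℝ) :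
    ∃ s, f s ≤ bernoulliMean p f := by
  obtain ⟨s, hs⟩ := Finite.exists_min f
  exact ⟨s, (bernoulliMean_const (f s)).ge.trans (bernoulliMean_mono hp0 hp1 hs)⟩

lemma bernoulliMean_ite_mem [DecidableEq V] (v : V) :
    bernoulliMean p (fun s => if v ∈ s then 1 else 0) = p := by
  have h := bernoulliMean_add (p := p) (fun s => if v ∈ s then 1 else 0)
    (fun s => if Disjoint {v} s then 1 else 0)
  have hone : (fun s : Finset V => (if v ∈ s then 1 else 0) + if Disjoint {v} s then 1 else 0)
      = fun _ => (1 : ℝ) := by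
    funext s
    by_cases hv : v ∈ s <;> simp [hv]
  rw [hone, bernoulliMean_const, bernoulliMean_ite_disjoint, card_singleton, pow_one] at h
  linarith

lemma bernoulliMean_ite_mem_one_div_card_inter_le [DecidableEq V] (hp0 : 0 ≤ p) (hp1 : p ≤ 1)
    {N : Finset V} {v : V} (hv : v ∈ N) :
    bernoulliMean p (fun s => if v ∈ s then 1 / #(N ∩ s) else 0) ≤ 1 / #N := by
  set f : V → Finset V → ℝ := fun u s => if u ∈ s then 1 / #(N ∩ s) else 0
  -- By symmetry all `u ∈ N` give the same mean, and for each `s` the `f u s` add up to at most 1.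
  have hsymm : ∀ u ∈ N, bernoulliMean p (f u) = bernoulliMean p (f v) := by
    intro u hu
    rw [← bernoulliMean_comp_finsetCongr (Equiv.swap u v) (f v)]
    congr 1
    funext s
    have hN : N.map (Equiv.swap u v).toEmbedding = N := by
      ext x
      simp only [mem_map_equiv, Equiv.symm_swap, Equiv.swap_apply_def]
      split_ifs <;> simp_all
    simp only [f, Function.comp_apply, Equiv.finsetCongr_apply, mem_map_equiv, Equiv.symm_swap,
      Equiv.swap_apply_right]
    rw [← hN, ← map_inter, card_map, hN]
  have htotal : ∀ s, ∑ u ∈ N, f u s ≤ 1 := by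
    intro s
    simp only [f]
    rw [← sum_filter, sum_const, nsmul_eq_mul, filter_mem_eq_inter, mul_one_div]
    exact div_self_le_one _
  have hN : (0 : ℝ) < #N := by exact_mod_cast card_pos.mpr ⟨v, hv⟩
  rw [le_div_iff₀ hN]
  calc bernoulliMean p (f v) * #N = ∑ u ∈ N, bernoulliMean p (f u) := by
        rw [sum_congr rfl hsymm, sum_const, nsmul_eq_mul, mul_comm]
    _ = bernoulliMean p (fun s => ∑ u ∈ N, f u s) := (bernoulliMean_sum N f).symm
    _ ≤ bernoulliMean p (fun _ => 1) := bernoulliMean_mono hp0 hp1 htotal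
    _ = 1 := bernoulliMean_const 1

end RandomSubset

variable {G : SimpleGraph V}

namespace IsDominatingSet

variable {D : Set V}

lemma mono (h : IsDominatingSet G D) {D' : Set V} (hDD' : D ⊆ D') : IsDominatingSet G D' :=
  fun v hv => (h v fun hvD => hv (hDD' hvD)).imp fun _ ⟨hu, huv⟩ => ⟨hDD' hu, huv⟩

lemma nonempty [Nonempty V] (h : IsDominatingSet G D) : D.Nonempty := by
  by_contra hD
  obtain ⟨v⟩ := ‹Nonempty V›
  obtain ⟨u, hu, -⟩ := h v fun hv => hD ⟨v, hv⟩
  exact hD ⟨u, hu⟩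

lemma exists_dist_le_one (h : IsDominatingSet G D) (x : V) : ∃ t ∈ D, G.dist t x ≤ 1 := by
  by_cases hx : x ∈ D
  · exact ⟨x, hx, by simp⟩
  · obtain ⟨t, ht, hadj⟩ := h x hx
    exact ⟨t, ht, (dist_eq_one_iff_adj.mpr hadj).le⟩

lemma exists_dist_lt (h : IsDominatingSet G D) (hconn : G.Connected) {u w : V}
    (huw : 2 ≤ G.dist u w) : ∃ t ∈ D, G.dist u t ≤ 3 ∧ G.dist t w < G.dist u w := by
  obtain ⟨W, hW⟩ := hconn.exists_walk_length_eq_dist u w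
  obtain ⟨t, ht, htx⟩ := h.exists_dist_le_one (W.getVert 2)
  have hux : G.dist u (W.getVert 2) ≤ 2 := (dist_le (W.take 2)).trans (by simp [Walk.take_length])
  have hxw : G.dist (W.getVert 2) w ≤ G.dist u w - 2 :=
    (dist_le (W.drop 2)).trans (by simp [Walk.drop_length, hW])
  have h1 := hconn.dist_triangle (u := u) (v := W.getVert 2) (w := t)
  have h2 := hconn.dist_triangle (u := t) (v := W.getVert 2) (w := w)
  rw [dist_comm (u := W.getVert 2) (v := t)] at h1
  exact ⟨t, ht, by omega, by omega⟩

end IsDominatingSet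

namespace SimpleGraph

lemma induce_union_support_union_connected {P Q : Set V} (hP : (G.induce P).Connected)
    (hQ : (G.induce Q).Connected) {u w : V} (hu : u ∈ P) (hw : w ∈ Q) (W : G.Walk u w) :
    (G.induce (P ∪ {x | x ∈ W.support} ∪ Q)).Connected := by
  have hPW := induce_union_connected hP.preconnected W.connected_induce_support.preconnected
    ⟨u, hu, W.start_mem_support⟩
  exact induce_union_connected hPW.preconnected hQ.preconnected
    ⟨w, Or.inr W.end_mem_support, hw⟩

variable [DecidableEq V]

lemma Walk.card_support_toFinset_sdiff_le {u w : V} (W : G.Walk u w) {D : Finset V} (hu : u ∈ D)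
    (hw : w ∈ D) : #(W.support.toFinset \ D) ≤ W.length - 1 := by
  have hsub : W.support.toFinset \ D ⊆ (Ioo 0 W.length).image W.getVert := by
    intro x hx
    rw [mem_sdiff, List.mem_toFinset, Walk.mem_support_iff_exists_getVert] at hx
    obtain ⟨⟨i, rfl, hi⟩, hiD⟩ := hx
    refine mem_image_of_mem _ (mem_Ioo.mpr ⟨Nat.pos_of_ne_zero ?_, lt_of_le_of_ne hi ?_⟩)
    · rintro rfl
      exact hiD (by simpa using hu)
    · rintro rfl
      exact hiD (by simpa using hw)
  calc #(W.support.toFinset \ D) ≤ #(Ioo 0 W.length) := (card_le_card hsub).trans card_image_le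
    _ = W.length - 1 := by simp

lemma exists_closest_pair {β : Type*} [LinearOrder β] (d : V → V → β)
    {𝒞 : Finset (Finset V)} (hne : ∀ C ∈ 𝒞, C.Nonempty) (htwo : 1 < #𝒞) :
    ∃ P ∈ 𝒞, ∃ Q ∈ 𝒞, P ≠ Q ∧ ∃ u ∈ P, ∃ w ∈ Q,
      ∀ P' ∈ 𝒞, ∀ Q' ∈ 𝒞, P' ≠ Q' → ∀ a ∈ P', ∀ b ∈ Q', d u w ≤ d a b := by
  set pairs := 𝒞.offDiag.biUnion fun PQ => PQ.1 ×ˢ PQ.2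
  have hmem : ∀ x, x ∈ pairs ↔ ∃ P ∈ 𝒞, ∃ Q ∈ 𝒞, P ≠ Q ∧ x.1 ∈ P ∧ x.2 ∈ Q := by
    simp [pairs, and_assoc]
  obtain ⟨P, hP, Q, hQ, hPQ⟩ := one_lt_card.mp htwo
  obtain ⟨u, hu⟩ := hne P hP
  obtain ⟨w, hw⟩ := hne Q hQ
  obtain ⟨⟨u, w⟩, hx, hmin⟩ :=
    exists_min_image pairs (fun x => d x.1 x.2) ⟨(u, w), (hmem _).mpr ⟨P, hP, Q, hQ, hPQ, hu, hw⟩⟩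
  obtain ⟨P, hP, Q, hQ, hPQ, hu, hw⟩ := (hmem _).mp hx
  exact ⟨P, hP, Q, hQ, hPQ, u, hu, w, hw, fun P' hP' Q' hQ' hPQ' a ha b hb =>
    hmin (a, b) ((hmem _).mpr ⟨P', hP', Q', hQ', hPQ', ha, hb⟩)⟩

lemma card_le_of_forall_three_le_dist {M : ℕ}
    (hM : ∀ S : Finset V, (S : Set V).Pairwise (fun a b => 3 ≤ G.dist a b) → #S ≤ M)
    {𝒞 : Finset (Finset V)} (hne : ∀ C ∈ 𝒞, C.Nonempty)
    (hfar : ∀ P ∈ 𝒞, ∀ Q ∈ 𝒞, P ≠ Q → ∀ a ∈ P, ∀ b ∈ Q, 3 ≤ G.dist a b) : #𝒞 ≤ M := by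
  choose r hr using hne
  have hfar' : ∀ P Q : 𝒞, P ≠ Q → 3 ≤ G.dist (r P P.2) (r Q Q.2) := fun P Q hPQ =>
    hfar P P.2 Q Q.2 (Subtype.coe_injective.ne hPQ) _ (hr _ _) _ (hr _ _)
  have hinj : Function.Injective fun C : 𝒞 => r C C.2 := by
    intro P Q hPQ
    by_contra hne
    simpa [hPQ] using hfar' P Q hne
  rw [← card_attach, ← card_image_of_injective _ hinj]
  refine hM _ ?_
  simp only [coe_image, coe_attach]
  rintro _ ⟨P, -, rfl⟩ _ ⟨Q, -, rfl⟩ hPQ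
  exact hfar' P Q fun h => hPQ (h ▸ rfl)

theorem exists_merge_step (hconn : G.Connected) {M : ℕ}
    (hM : ∀ S : Finset V, (S : Set V).Pairwise (fun a b => 3 ≤ G.dist a b) → #S ≤ M)
    {𝒞 : Finset (Finset V)} (h𝒞 : ∀ C ∈ 𝒞, (G.induce (C : Set V)).Connected)
    (hdom : IsDominatingSet G ↑(𝒞.sup id)) (htwo : 1 < #𝒞) :
    ∃ 𝒞' : Finset (Finset V), (∀ C ∈ 𝒞', (G.induce (C : Set V)).Connected) ∧
      𝒞.sup id ⊆ 𝒞'.sup id ∧ #𝒞' < #𝒞 ∧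
      (#(𝒞'.sup id) ≤ #(𝒞.sup id) + 1 ∨ #(𝒞'.sup id) ≤ #(𝒞.sup id) + 2 ∧ #𝒞 ≤ M) := by
  have hne : ∀ C ∈ 𝒞, C.Nonempty := fun C hC => by
    obtain ⟨⟨v, hv⟩⟩ := (h𝒞 C hC).nonempty
    exact ⟨v, hv⟩
  obtain ⟨P, hP, Q, hQ, hPQ, u, hu, w, hw, hmin⟩ := exists_closest_pair G.dist hne htwo
  set D := 𝒞.sup id
  have hD : ∀ {x C}, C ∈ 𝒞 → x ∈ C → x ∈ D := fun hC hx => mem_sup.mpr ⟨_, hC, hx⟩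
  have hμ : G.dist u w ≤ 3 := by
    by_contra! h
    obtain ⟨t, htD, hut, htw⟩ := hdom.exists_dist_lt hconn (u := u) (w := w) (by omega)
    obtain ⟨R, hR, htR⟩ := mem_sup.mp (mem_coe.mp htD)
    by_cases hRP : R = P
    · subst hRP
      exact (hmin R hR Q hQ hPQ t htR w hw).not_gt htw
    · have := hmin P hP R hR (Ne.symm hRP) u hu t htR
      omega
  obtain ⟨W, hW⟩ := hconn.exists_walk_length_eq_dist u w
  set S := W.support.toFinset
  set 𝒞' := insert (P ∪ S ∪ Q) ((𝒞.erase P).erase Q)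
  have hsup : D ⊆ 𝒞'.sup id := by
    intro x hx
    obtain ⟨R, hR, hxR : x ∈ R⟩ := mem_sup.mp hx
    rw [mem_sup]
    by_cases hRP : R = P
    · exact ⟨_, mem_insert_self _ _, by simp [← hRP, hxR]⟩
    by_cases hRQ : R = Q
    · exact ⟨_, mem_insert_self _ _, by simp [← hRQ, hxR]⟩
    exact ⟨R, mem_insert_of_mem (mem_erase.mpr ⟨hRQ, mem_erase.mpr ⟨hRP, hR⟩⟩), hxR⟩
  have hsup' : 𝒞'.sup id ⊆ D ∪ S := by
    intro x hx
    obtain ⟨R, hR, hxR⟩ := mem_sup.mp hx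
    rcases mem_insert.mp hR with rfl | hR
    · simp only [id, mem_union] at hxR ⊢
      rcases hxR with (hxP | hxS) | hxQ
      exacts [Or.inl (hD hP hxP), Or.inr hxS, Or.inl (hD hQ hxQ)]
    · exact mem_union_left _ (hD (mem_of_mem_erase (mem_of_mem_erase hR)) hxR)
  refine ⟨𝒞', ?_, hsup, ?_, ?_⟩
  · intro C hC
    rcases mem_insert.mp hC with rfl | hC
    · have := induce_union_support_union_connected (h𝒞 P hP) (h𝒞 Q hQ) hu hw W
      rwa [← List.coe_toFinset, ← coe_union, ← coe_union] at this
    · exact h𝒞 C (mem_of_mem_erase (mem_of_mem_erase hC))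
  · have : #𝒞' ≤ #((𝒞.erase P).erase Q) + 1 := card_insert_le _ _
    rw [card_erase_of_mem (mem_erase.mpr ⟨hPQ.symm, hQ⟩), card_erase_of_mem hP] at this
    omega
  have hcost : #(𝒞'.sup id) ≤ #D + (G.dist u w - 1) := calc
    #(𝒞'.sup id) ≤ #(D ∪ S) := card_le_card hsup'
    _ = #D + #(S \ D) := by rw [← card_union_of_disjoint disjoint_sdiff, union_sdiff_self_eq_union]
    _ ≤ #D + (G.dist u w - 1) := by
      grw [W.card_support_toFinset_sdiff_le (hD hP hu) (hD hQ hw), hW]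
  by_cases h3 : G.dist u w = 3
  · refine Or.inr ⟨by omega, card_le_of_forall_three_le_dist hM hne ?_⟩
    exact fun P' hP' Q' hQ' hPQ' a ha b hb => h3 ▸ hmin P' hP' Q' hQ' hPQ' a ha b hb
  · exact Or.inl (by omega)

theorem exists_connected_dominating_card_add_two_le (hconn : G.Connected) {M : ℕ}
    (hM : ∀ S : Finset V, (S : Set V).Pairwise (fun a b => 3 ≤ G.dist a b) → #S ≤ M)
    (𝒞 : Finset (Finset V)) (h𝒞 : ∀ C ∈ 𝒞, (G.induce (C : Set V)).Connected)
    (hdom : IsDominatingSet G ↑(𝒞.sup id)) :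
    ∃ X : Finset V, IsDominatingSet G ↑X ∧ (G.induce (X : Set V)).Connected ∧
      #X + 2 ≤ #(𝒞.sup id) + #𝒞 + min #𝒞 M := by
  have := hconn.nonempty
  have hM1 : 1 ≤ M := this.elim fun v => by simpa using hM {v} (by simp)
  induction h : #𝒞 using Nat.strong_induction_on generalizing 𝒞 with
  | _ c ih =>
  have hc : c ≠ 0 := by
    rintro rfl
    obtain ⟨x, hx⟩ := hdom.nonempty
    simp [card_eq_zero.mp h] at hx
  obtain rfl | htwo := (Nat.one_le_iff_ne_zero.mpr hc).eq_or_lt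
  · obtain ⟨C, rfl⟩ := card_eq_one.mp h
    refine ⟨C, by simpa using hdom, by simpa using h𝒞 C (mem_singleton_self C), ?_⟩
    simp only [sup_singleton, id_eq]
    omega
  · obtain ⟨𝒞', h𝒞', hsub, hlt, hcost⟩ := exists_merge_step hconn hM h𝒞 hdom (h ▸ htwo)
    obtain ⟨X, hXdom, hXconn, hX⟩ :=
      ih _ (h ▸ hlt) 𝒞' h𝒞' (hdom.mono (by exact_mod_cast hsub)) rfl
    refine ⟨X, hXdom, hXconn, ?_⟩
    omega

section Fintype

variable [Fintype V] [DecidableRel G.Adj]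

variable (G) in
def closedNeighborFinset (v : V) : Finset V := insert v (G.neighborFinset v)

lemma mem_closedNeighborFinset {u v : V} : u ∈ G.closedNeighborFinset v ↔ u = v ∨ G.Adj v u := by
  simp [closedNeighborFinset]

lemma self_mem_closedNeighborFinset (v : V) : v ∈ G.closedNeighborFinset v :=
  mem_insert_self _ _

lemma card_closedNeighborFinset (v : V) : #(G.closedNeighborFinset v) = G.degree v + 1 := by
  rw [closedNeighborFinset, card_insert_of_notMem (notMem_neighborFinset_self G v),
    card_neighborFinset_eq_degree]

lemma dist_le_two_of_mem_closedNeighborFinset (hconn : G.Connected) {u w x : V}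
    (hu : x ∈ G.closedNeighborFinset u) (hw : x ∈ G.closedNeighborFinset w) : G.dist u w ≤ 2 := by
  have hdist : ∀ {v}, x ∈ G.closedNeighborFinset v → G.dist v x ≤ 1 := fun h => by
    rcases mem_closedNeighborFinset.mp h with rfl | hadj
    · simp
    · exact (dist_eq_one_iff_adj.mpr hadj).le
  have := hconn.dist_triangle (u := u) (v := x) (w := w)
  rw [dist_comm (u := x)] at this
  have := hdist hu
  have := hdist hw
  omega

theorem card_mul_le_card_of_pairwise_three_le_dist (hconn : G.Connected) {k : ℕ}
    (hdeg : ∀ v, k ≤ G.degree v) {S : Finset V}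
    (hS : (S : Set V).Pairwise fun a b => 3 ≤ G.dist a b) : #S * (k + 1) ≤ Fintype.card V := by
  have hdisj : (S : Set V).PairwiseDisjoint G.closedNeighborFinset := by
    intro u hu w hw huw
    rw [Function.onFun, Finset.disjoint_left]
    intro x hxu hxw
    have := hS hu hw huw
    have := dist_le_two_of_mem_closedNeighborFinset hconn hxu hxw
    omega
  calc #S * (k + 1) ≤ ∑ v ∈ S, #(G.closedNeighborFinset v) := by
        rw [← smul_eq_mul, ← sum_const]
        refine sum_le_sum fun v _ => ?_
        rw [card_closedNeighborFinset]
        exact Nat.succ_le_succ (hdeg v)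
    _ = #(S.biUnion G.closedNeighborFinset) := (card_biUnion hdisj).symm
    _ ≤ Fintype.card V := card_le_univ _

theorem exists_connected_pieces_card_le (A : Finset V) :
    ∃ 𝒞 : Finset (Finset V), (∀ C ∈ 𝒞, (G.induce (C : Set V)).Connected) ∧ 𝒞.sup id = A ∧
      (#𝒞 : ℝ) ≤ ∑ v ∈ A, 1 / (#(G.closedNeighborFinset v ∩ A) : ℝ) := by
  classical
  set H := ((⊤ : G.Subgraph).induce (A : Set V)).spanningCoe
  have hH : ∀ {a b}, H.Adj a b ↔ a ∈ A ∧ b ∈ A ∧ G.Adj a b := by simp [H]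
  have hA : ∀ {a b}, a ∈ A → H.Reachable a b → b ∈ A := by
    intro a b ha hab
    induction (reachable_iff_reflTransGen a b).mp hab with
    | refl => exact ha
    | tail _ hadj _ => exact (hH.mp hadj).2.1
  set piece : V → Finset V :=
    fun v => {u ∈ A | H.connectedComponentMk u = H.connectedComponentMk v}
  refine ⟨A.image piece, ?_, ?_, ?_⟩
  · simp only [mem_image, forall_exists_index, and_imp]
    rintro _ v hv rfl
    have hsupp : (piece v : Set V) = (H.connectedComponentMk v).supp := by
      ext u
      simp only [piece, coe_filter, Set.mem_ofPred_eq, ConnectedComponent.mem_supp_iff,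
        and_iff_right_iff_imp]
      exact fun h => hA hv (ConnectedComponent.exact h).symm
    rw [hsupp]
    exact (H.connectedComponentMk v).connected_toSimpleGraph.mono fun a b hab => (hH.mp hab).2.2
  · ext x
    simp only [mem_sup, mem_image, id]
    constructor
    · rintro ⟨_, ⟨v, -, rfl⟩, hx⟩
      exact (mem_filter.mp hx).1
    · exact fun hx => ⟨_, ⟨x, hx, rfl⟩, mem_filter.mpr ⟨hx, rfl⟩⟩
  · refine card_image_le_sum_one_div_card
      (fun v hv => mem_inter.mpr ⟨self_mem_closedNeighborFinset v, hv⟩) fun v hv u hu => ?_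
    obtain ⟨huv, huA⟩ := mem_inter.mp hu
    refine mem_filter.mpr ⟨huA, ?_⟩
    suffices H.connectedComponentMk u = H.connectedComponentMk v by simp only [piece, this]
    rcases mem_closedNeighborFinset.mp huv with rfl | hadj
    · rfl
    · exact ConnectedComponent.eq.mpr (hH.mpr ⟨huA, hv, hadj.symm⟩).reachable

/-- With `B` the set of vertices that `A` does not dominate, this bounds `#(A ∪ B)` plus the number
of connected pieces of `A ∪ B`: the last sum bounds the number of components of `G[A]`. -/
noncomputable def dominationCost (A : Finset V) : ℝ :=
  #A + 2 * #({v | Disjoint (G.closedNeighborFinset v) A} : Finset V) +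
    ∑ v ∈ A, 1 / (#(G.closedNeighborFinset v ∩ A) : ℝ)

lemma dominationCost_eq_sum (A : Finset V) :
    G.dominationCost A = ∑ v, ((if v ∈ A then 1 else 0) +
      2 * (if Disjoint (G.closedNeighborFinset v) A then 1 else 0) +
      (if v ∈ A then 1 / (#(G.closedNeighborFinset v ∩ A) : ℝ) else 0)) := by
  simp only [dominationCost, sum_add_distrib, ← mul_sum, sum_boole, sum_ite_mem, univ_inter,
    filter_mem_eq_inter]

theorem exists_dominationCost_le {k : ℕ} (hdeg : ∀ v, k ≤ G.degree v) {p : ℝ} (hp0 : 0 ≤ p)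
    (hp1 : p ≤ 1) :
    ∃ A : Finset V,
      G.dominationCost A ≤ Fintype.card V * (p + 2 * (1 - p) ^ (k + 1) + 1 / (k + 1)) := by
  obtain ⟨A, hA⟩ := exists_le_bernoulliMean hp0 hp1 G.dominationCost
  refine ⟨A, hA.trans ?_⟩
  rw [funext (dominationCost_eq_sum (G := G)), bernoulliMean_sum, ← nsmul_eq_mul, ← card_univ,
    ← sum_const]
  refine sum_le_sum fun v _ => ?_
  have hN : k + 1 ≤ #(G.closedNeighborFinset v) := by
    rw [card_closedNeighborFinset]
    exact Nat.succ_le_succ (hdeg v)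
  rw [bernoulliMean_add, bernoulliMean_add, bernoulliMean_const_mul, bernoulliMean_ite_mem,
    bernoulliMean_ite_disjoint]
  have hpow : (1 - p) ^ #(G.closedNeighborFinset v) ≤ (1 - p) ^ (k + 1) :=
    pow_le_pow_of_le_one (by linarith) (by linarith) hN
  have hinv := bernoulliMean_ite_mem_one_div_card_inter_le hp0 hp1
    (self_mem_closedNeighborFinset (G := G) v)
  have hN' : 1 / (#(G.closedNeighborFinset v) : ℝ) ≤ 1 / (k + 1) :=
    one_div_le_one_div_of_le (by positivity) (by exact_mod_cast hN)
  linarith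

theorem exists_connected_dominating_card_le (hconn : G.Connected) {k : ℕ}
    (hdeg : ∀ v, k ≤ G.degree v) (A : Finset V) :
    ∃ X : Finset V, IsDominatingSet G ↑X ∧ (G.induce (X : Set V)).Connected ∧
      (#X : ℝ) + 2 ≤ G.dominationCost A + Fintype.card V / (k + 1) := by
  set B : Finset V := {v | Disjoint (G.closedNeighborFinset v) A}
  obtain ⟨𝒞, h𝒞, hsup, hcard⟩ := G.exists_connected_pieces_card_le A
  set 𝒞' := 𝒞 ∪ B.image singleton
  have hsup' : 𝒞'.sup id = A ∪ B := by
    rw [sup_union, hsup, sup_image]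
    simp
  have h𝒞' : ∀ C ∈ 𝒞', (G.induce (C : Set V)).Connected := by
    simp only [𝒞', mem_union, mem_image]
    rintro C (hC | ⟨v, -, rfl⟩)
    · exact h𝒞 C hC
    · rw [coe_singleton]
      exact Connected.of_subsingleton
  have hdom : IsDominatingSet G ↑(A ∪ B) := by
    intro v hv
    simp only [coe_union, Set.mem_union, mem_coe, not_or] at hv
    obtain ⟨u, hu, huA⟩ := not_disjoint_iff.mp fun h => hv.2 (mem_filter.mpr ⟨mem_univ v, h⟩)
    rcases mem_closedNeighborFinset.mp hu with rfl | hadj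
    · exact absurd huA hv.1
    · exact ⟨u, mem_coe.mpr (mem_union_left _ huA), hadj.symm⟩
  have hM : ∀ S : Finset V, (S : Set V).Pairwise (fun a b => 3 ≤ G.dist a b) →
      #S ≤ Fintype.card V / (k + 1) := fun S hS =>
    (Nat.le_div_iff_mul_le k.succ_pos).mpr
      (card_mul_le_card_of_pairwise_three_le_dist hconn hdeg hS)
  obtain ⟨X, hXdom, hXconn, hX⟩ :=
    exists_connected_dominating_card_add_two_le hconn hM 𝒞' h𝒞' (hsup' ▸ hdom)
  refine ⟨X, hXdom, hXconn, ?_⟩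
  have hD : #(A ∪ B) ≤ #A + #B := card_union_le A B
  have hc : #𝒞' ≤ #𝒞 + #B := (card_union_le _ _).trans (by gcongr; exact card_image_le)
  have hmin := min_le_right #𝒞' (Fintype.card V / (k + 1))
  have hdiv : ((Fintype.card V / (k + 1) : ℕ) : ℝ) ≤ Fintype.card V / (k + 1) := by
    exact_mod_cast Nat.cast_div_le
  rw [hsup'] at hX
  have hX' : (#X : ℝ) + 2 ≤ #A + #B + (#𝒞 + #B) + (Fintype.card V / (k + 1) : ℕ) := by
    exact_mod_cast hX.trans (by omega)
  unfold dominationCost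
  linarith

end Fintype

end SimpleGraph

end

lemma one_sub_log_div_pow_le (n : ℕ) :
    (1 - Real.log (n + 1) / (n + 1)) ^ (n + 1) ≤ 1 / (n + 1) := by
  have hn : (0 : ℝ) < n + 1 := by positivity
  have h := Real.one_sub_div_pow_le_exp_neg (n := n + 1) (t := Real.log (n + 1))
    (by push_cast; linarith [Real.log_le_sub_one_of_pos hn])
  push_cast at h
  rwa [Real.exp_neg, Real.exp_log hn, ← one_div] at h

/-- **Upper bound for the connected domination number.** For a connected graph `G` with `n`
vertices and minimum degree at least `k`, `γ_c(G) ≤ (n/(k+1))·(ln(k+1) + 4) - 2`. -/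
theorem connectedDominationNumber_le {V : Type*} [Fintype V]
    (G : SimpleGraph V) [DecidableRel G.Adj] (n k : ℕ)
    (hn : Fintype.card V = n) (hconn : G.Connected) (hdeg : ∀ v, k ≤ G.degree v) :
    (connectedDominationNumber G : ℝ) ≤
      (n : ℝ) / ((k : ℝ) + 1) * (Real.log ((k : ℝ) + 1) + 4) - 2 := by
  classical
  subst hn
  set p := Real.log (k + 1) / (k + 1)
  have hk : (0 : ℝ) < k + 1 := by positivity
  have hp0 : 0 ≤ p := div_nonneg (Real.log_nonneg (by linarith)) hk.le
  have hp1 : p ≤ 1 :=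
    div_le_one_of_le₀ ((Real.log_le_sub_one_of_pos hk).trans (by linarith)) hk.le
  obtain ⟨A, hA⟩ := G.exists_dominationCost_le hdeg hp0 hp1
  obtain ⟨X, hXdom, hXconn, hX⟩ := G.exists_connected_dominating_card_le hconn hdeg A
  have hγ : connectedDominationNumber G ≤ #X :=
    Nat.sInf_le ⟨X, hXdom, hXconn, Set.ncard_coe_finset X⟩
  have hq := one_sub_log_div_pow_le k
  calc (connectedDominationNumber G : ℝ) ≤ #X := by exact_mod_cast hγ
    _ ≤ Fintype.card V * (p + 2 * (1 - p) ^ (k + 1) + 1 / (k + 1)) +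
        Fintype.card V / (k + 1) - 2 := by linarith
    _ ≤ Fintype.card V * (p + 2 * (1 / (k + 1)) + 1 / (k + 1)) +
        Fintype.card V / (k + 1) - 2 := by gcongr
    _ = _ := by simp only [p]; field_simp; ring
end
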